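/- arXiv:2102.12410 — 9 statements merged into one kernel-verified Lean document; each statement's English description precedes it below -/
import Mathlib

section
/- Let (F_i) be the Fibonacci sequence with F_1 = F_2 = 1 and F_{i+2} = F_{i+1} + F_i, and let S = Σ_{i=1}^∞ 1/F_i (this series converges). Then a real number x admits a Fibonacci expansion, i.e., there exists (c_i) ∈ {0,1}^ℕ with x = Σ_{i=1}^∞ c_i / F_i, if and only if x ∈ [0, S]. -/
/-!
The forward direction is termwise comparison with `∑ 1/F_i`. For the converse, a nonnegative
summable sequence in which every term is at most the sum of all later terms represents every
point of `[0, ∑ aᵢ]` as a subsum: choose digits greedily, adding `aₙ` whenever the partial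
sum stays `≤ x`. The invariant `0 ≤ x - pₙ ≤ ∑_{k ≥ n} a_k` survives a skipped term precisely
because `aₙ` is dominated by the tail after it, and the tails tend to `0`. Reciprocal
Fibonacci numbers have this property since `1/F_n ≤ 1/F_{n+1} + 1/F_{n+2} + 1/F_{n+3}`, which
follows from `F_{n+1} ≤ 2 F_n`, `F_{n+2} ≤ 3 F_n`, `F_{n+3} ≤ 5 F_n` and `1/2 + 1/3 + 1/5 > 1`.
-/

open Filter Topology Finset Set

lemma natCast_fin_two_mul_mem_Icc (c : Fin 2) {t : ℝ} (ht : 0 ≤ t) :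
    ((c : ℕ) : ℝ) * t ∈ Icc 0 t := by
  fin_cases c <;> simp [ht]

section Subsums

variable {a : ℕ → ℝ}

lemma tsum_fin_two_mul_mem_Icc (ha : 0 ≤ a) (hs : Summable a) (c : ℕ → Fin 2) :
    ∑' i, ((c i : ℕ) : ℝ) * a i ∈ Icc 0 (∑' i, a i) := by
  have hterm i := natCast_fin_two_mul_mem_Icc (c i) (ha i)
  exact ⟨tsum_nonneg fun i => (hterm i).1,
    (hs.of_nonneg_of_le (fun i => (hterm i).1) fun i => (hterm i).2).tsum_le_tsum
      (fun i => (hterm i).2) hs⟩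

lemma tsum_nat_add_eq_add (hs : Summable a) (n : ℕ) :
    ∑' k, a (k + n) = a n + ∑' k, a (k + (n + 1)) := by
  rw [((summable_nat_add_iff n).2 hs).tsum_eq_zero_add, zero_add]
  simp only [add_right_comm _ 1 n, add_assoc]

noncomputable def greedySum (a : ℕ → ℝ) (x : ℝ) : ℕ → ℝ
  | 0 => 0
  | n + 1 => if greedySum a x n + a n ≤ x then greedySum a x n + a n else greedySum a x n

noncomputable def greedyDigit (a : ℕ → ℝ) (x : ℝ) (n : ℕ) : Fin 2 :=
  if greedySum a x n + a n ≤ x then 1 else 0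

lemma greedySum_succ (x : ℝ) (n : ℕ) :
    greedySum a x (n + 1) = greedySum a x n + ((greedyDigit a x n : ℕ) : ℝ) * a n := by
  rw [greedySum, greedyDigit]
  split_ifs <;> simp

lemma sum_range_greedyDigit_mul (x : ℝ) (n : ℕ) :
    ∑ i ∈ range n, ((greedyDigit a x i : ℕ) : ℝ) * a i = greedySum a x n := by
  induction n with
  | zero => simp [greedySum]
  | succ n ih => rw [sum_range_succ, ih, greedySum_succ]

lemma greedySum_mem_Icc (hs : Summable a) (hdom : ∀ n, a n ≤ ∑' k, a (k + (n + 1)))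
    {x : ℝ} (hx : x ∈ Icc 0 (∑' i, a i)) (n : ℕ) :
    x ∈ Icc (greedySum a x n) (greedySum a x n + ∑' k, a (k + n)) := by
  induction n with
  | zero => simpa [greedySum] using hx
  | succ n ih =>
    have htail := tsum_nat_add_eq_add hs n
    rw [greedySum]
    split_ifs with h
    · exact ⟨h, by linarith [ih.2]⟩
    · exact ⟨ih.1, by linarith [hdom n]⟩

lemma hasSum_greedyDigit_mul (ha : 0 ≤ a) (hs : Summable a)
    (hdom : ∀ n, a n ≤ ∑' k, a (k + (n + 1))) {x : ℝ} (hx : x ∈ Icc 0 (∑' i, a i)) :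
    HasSum (fun i => ((greedyDigit a x i : ℕ) : ℝ) * a i) x := by
  rw [hasSum_iff_tendsto_nat_of_nonneg
    (fun i => (natCast_fin_two_mul_mem_Icc _ (ha i)).1), funext (sum_range_greedyDigit_mul x)]
  have hlower : Tendsto (fun n => x - ∑' k, a (k + n)) atTop (𝓝 x) := by
    simpa using tendsto_const_nhds.sub (tendsto_sum_nat_add a)
  exact tendsto_of_tendsto_of_tendsto_of_le_of_le hlower tendsto_const_nhds
    (fun n => by linarith [(greedySum_mem_Icc hs hdom hx n).2])
    (fun n => (greedySum_mem_Icc hs hdom hx n).1)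

theorem exists_fin_two_expansion_iff (ha : 0 ≤ a) (hs : Summable a)
    (hdom : ∀ n, a n ≤ ∑' k, a (k + (n + 1))) (x : ℝ) :
    (∃ c : ℕ → Fin 2, x = ∑' i, ((c i : ℕ) : ℝ) * a i) ↔ x ∈ Icc 0 (∑' i, a i) := by
  constructor
  · rintro ⟨c, rfl⟩
    exact tsum_fin_two_mul_mem_Icc ha hs c
  · intro hx
    exact ⟨greedyDigit a x, (hasSum_greedyDigit_mul ha hs hdom hx).tsum_eq.symm⟩

end Subsums

section Fibonacci

open Nat Real
open scoped goldenRatio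

lemma eq_fib_succ_of_rec {F : ℕ → ℕ} (h1 : F 1 = 1) (h2 : F 2 = 1)
    (hrec : ∀ i, 1 ≤ i → F (i + 2) = F (i + 1) + F i) (n : ℕ) : F (n + 1) = fib (n + 1) := by
  induction n using Nat.strong_induction_on with
  | _ n ih =>
    match n, ih with
    | 0, _ => exact h1
    | 1, _ => exact h2
    | n + 2, ih =>
      rw [hrec (n + 1) (by omega), ih (n + 1) (by omega), ih n (by omega),
        fib_add_two (n := n + 1), add_comm]

lemma natCast_fib_ne_zero {n : ℕ} (hn : 1 ≤ n) : (fib n : ℝ) ≠ 0 :=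
  Nat.cast_ne_zero.2 (fib_pos.2 hn).ne'

lemma summable_inv_fib : Summable fun n => (fib n : ℝ)⁻¹ := by
  have hψ : -ψ < 1 := by linarith [neg_one_lt_goldenConj]
  refine summable_of_ratio_test_tendsto_lt_one hψ
    (eventually_atTop.2 ⟨1, fun n hn => inv_ne_zero (natCast_fib_ne_zero hn)⟩) ?_
  refine tendsto_fib_div_fib_succ_atTop.congr' (eventually_atTop.2 ⟨1, fun n hn => ?_⟩)
  have := natCast_fib_ne_zero hn
  simp only [norm_inv, Real.norm_natCast]
  field_simp

lemma inv_fib_succ_le_three_next (n : ℕ) :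
    (fib (n + 1) : ℝ)⁻¹ ≤ (fib (n + 2) : ℝ)⁻¹ + (fib (n + 3) : ℝ)⁻¹ + (fib (n + 4) : ℝ)⁻¹ := by
  have h0 : fib n ≤ fib (n + 1) := fib_le_fib_succ
  have e2 : fib (n + 2) = fib n + fib (n + 1) := fib_add_two
  have e3 : fib (n + 3) = fib (n + 1) + fib (n + 2) := fib_add_two
  have e4 : fib (n + 4) = fib (n + 2) + fib (n + 3) := fib_add_two
  have b2 : (fib (n + 2) : ℝ) ≤ 2 * fib (n + 1) := by exact_mod_cast (by omega)
  have b3 : (fib (n + 3) : ℝ) ≤ 3 * fib (n + 1) := by exact_mod_cast (by omega)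
  have b4 : (fib (n + 4) : ℝ) ≤ 5 * fib (n + 1) := by exact_mod_cast (by omega)
  calc (fib (n + 1) : ℝ)⁻¹
      ≤ (2 * fib (n + 1) : ℝ)⁻¹ + (3 * fib (n + 1) : ℝ)⁻¹ + (5 * fib (n + 1) : ℝ)⁻¹ := by
          field_simp; norm_num
    _ ≤ _ := by
      gcongr <;> exact_mod_cast fib_pos.2 (by omega)

lemma inv_fib_succ_le_tsum_tail (n : ℕ) :
    (fib (n + 1) : ℝ)⁻¹ ≤ ∑' k, (fib (k + (n + 1) + 1) : ℝ)⁻¹ := by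
  have hs : Summable fun k => (fib (k + (n + 1) + 1) : ℝ)⁻¹ :=
    (summable_nat_add_iff (n + 2)).2 summable_inv_fib |>.congr fun k => by ring_nf
  calc _ ≤ _ := inv_fib_succ_le_three_next n
    _ = ∑ k ∈ range 3, (fib (k + (n + 1) + 1) : ℝ)⁻¹ := by
        simp only [sum_range_succ, sum_range_zero]; ring_nf
    _ ≤ _ := hs.sum_le_tsum _ fun _ _ => by positivity

end Fibonacci

/-- A real number `x` has a Fibonacci expansion `x = Σ_{i=1}^∞ c_i / F_i` with
digits `c_i ∈ {0,1}` if and only if `x ∈ [0, S]`, where `S = Σ_{i=1}^∞ 1/F_i`. -/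
theorem stmt_1 (F : ℕ → ℕ) (h1 : F 1 = 1) (h2 : F 2 = 1)
    (hrec : ∀ i, 1 ≤ i → F (i + 2) = F (i + 1) + F i)
    (S : ℝ) (hS : S = ∑' i : ℕ, (1 : ℝ) / (F (i + 1) : ℝ)) (x : ℝ) :
    (∃ c : ℕ → Fin 2, x = ∑' i : ℕ, ((c i : ℕ) : ℝ) / (F (i + 1) : ℝ)) ↔
      x ∈ Set.Icc 0 S := by
  have hF := eq_fib_succ_of_rec h1 h2 hrec
  have hs : Summable fun i => (Nat.fib (i + 1) : ℝ)⁻¹ :=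
    (summable_nat_add_iff 1).2 summable_inv_fib
  simp only [hS, hF, div_eq_mul_inv, one_mul]
  exact exists_fin_two_expansion_iff (fun i => by positivity) hs
    inv_fib_succ_le_tsum_tail x
end

section
/- Let φ = (1+√5)/2 be the Golden ratio and let q ∈ (1, φ). Then for every real number x ∈ (0, 1/(q−1)), the set of sequences (c_i) ∈ {0,1}^ℕ satisfying x = Σ_{i=1}^∞ c_i q^{−i} has the cardinality of the continuum. -/
/-!
Expansions of `x` are produced digit by digit, the remainder `y` being replaced by `qy - d`, which
must stay in `J = (0, 1/(q-1))`. On the switch region `S = (1/q, 1/(q(q-1)))` both digits do this,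
off `S` only the forced one. For `q < φ` every orbit of the forced map enters `S`: below `S` it is
multiplied by `q`, above `S` its distance to the fixed point `1/(q-1)` of `y ↦ qy - 1` is
multiplied by `q`, and `1/(q-1) - 1 > 1/q` (that is, `q² < q + 1`) keeps it from jumping over `S`.
Hence reading a fresh bit of an arbitrary `b : ℕ → Fin 2` at every visit to `S` yields an
expansion of `x` for each `b`, and distinct `b` yield distinct expansions.
-/

open Set Filter Topology Function

theorem hasSum_div_pow_of_orbit {q C : ℝ} (hq : 1 < q) {y c : ℕ → ℝ} (hc : ∀ n, 0 ≤ c n)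
    (hy : ∀ n, y (n + 1) = q * y n - c n) (hC : ∀ n, |y n| ≤ C) :
    HasSum (fun n => c n / q ^ (n + 1)) (y 0) := by
  have hq0 : 0 < q := by linarith
  have partial_sum : ∀ n, ∑ i ∈ Finset.range n, c i / q ^ (i + 1) = y 0 - y n / q ^ n := by
    intro n
    induction n with
    | zero => simp
    | succ n ih =>
      rw [Finset.sum_range_succ, ih, hy]
      field_simp
      ring
  have remainder : Tendsto (fun n => y n / q ^ n) atTop (𝓝 0) := by
    have geom := (tendsto_pow_atTop_nhds_zero_of_lt_one (inv_nonneg.2 hq0.le)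
      (inv_lt_one_of_one_lt₀ hq)).const_mul C
    rw [mul_zero] at geom
    refine squeeze_zero_norm (fun n => ?_) geom
    rw [norm_div, Real.norm_eq_abs, Real.norm_eq_abs, abs_of_pos (pow_pos hq0 n), inv_pow,
      ← div_eq_mul_inv]
    exact div_le_div_of_nonneg_right (hC n) (pow_pos hq0 n).le
  rw [hasSum_iff_tendsto_nat_of_nonneg (fun n => div_nonneg (hc n) (by positivity))]
  simp_rw [partial_sum]
  simpa using tendsto_const_nhds.sub remainder

theorem sq_lt_add_one_of_lt_goldenRatio {q : ℝ} (hq0 : 0 < q) (hq : q < Real.goldenRatio) :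
    q ^ 2 < q + 1 := by
  nlinarith [Real.goldenRatio_sq, Real.one_lt_goldenRatio]

namespace QExpansion

noncomputable def switchRegion (q : ℝ) : Set ℝ := Ioo (1 / q) (1 / (q * (q - 1)))

noncomputable def forcedDigit (q y : ℝ) : Fin 2 := if y ≤ 1 / q then 0 else 1

noncomputable def forcedMap (q y : ℝ) : ℝ := q * y - (forcedDigit q y : ℕ)

-- A state is the current remainder together with the bits still to be read.
open Classical in
noncomputable def switchDigit (q : ℝ) (s : ℝ × (ℕ → Fin 2)) : Fin 2 :=
  if s.1 ∈ switchRegion q then s.2 0 else forcedDigit q s.1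

open Classical in
noncomputable def switchStep (q : ℝ) (s : ℝ × (ℕ → Fin 2)) : ℝ × (ℕ → Fin 2) :=
  (q * s.1 - (switchDigit q s : ℕ), if s.1 ∈ switchRegion q then fun n => s.2 (n + 1) else s.2)

noncomputable def switchExpansion (q : ℝ) (s : ℝ × (ℕ → Fin 2)) (n : ℕ) : Fin 2 :=
  switchDigit q ((switchStep q)^[n] s)

variable {q y : ℝ}

theorem switchStep_of_mem (b : ℕ → Fin 2) (hy : y ∈ switchRegion q) :
    switchStep q (y, b) = (q * y - (b 0 : ℕ), fun n => b (n + 1)) := by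
  simp [switchStep, switchDigit, hy]

theorem switchStep_of_notMem (b : ℕ → Fin 2) (hy : y ∉ switchRegion q) :
    switchStep q (y, b) = (forcedMap q y, b) := by
  simp [switchStep, switchDigit, forcedMap, hy]

theorem switchExpansion_add (s : ℝ × (ℕ → Fin 2)) (m n : ℕ) :
    switchExpansion q s (n + m) = switchExpansion q ((switchStep q)^[m] s) n := by
  simp [switchExpansion, iterate_add_apply]

theorem forcedMap_of_le (hy : y ≤ 1 / q) : forcedMap q y = q * y := by
  rw [forcedMap, forcedDigit, if_pos hy]
  simp

theorem forcedMap_of_lt (hy : 1 / q < y) : forcedMap q y = q * y - 1 := by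
  rw [forcedMap, forcedDigit, if_neg hy.not_ge]
  simp

theorem mul_mem_Ioo (hq : 1 < q) (h0 : 0 < y) (h1 : y < 1 / (q * (q - 1))) :
    q * y ∈ Ioo 0 (1 / (q - 1)) := by
  have hq1 : 0 < q - 1 := by linarith
  rw [lt_div_iff₀ (by positivity)] at h1
  refine ⟨by positivity, ?_⟩
  rw [lt_div_iff₀ hq1]
  linarith

theorem mul_sub_one_mem_Ioo (hq : 1 < q) (h0 : 1 / q < y) (h1 : y < 1 / (q - 1)) :
    q * y - 1 ∈ Ioo 0 (1 / (q - 1)) := by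
  have hq1 : 0 < q - 1 := by linarith
  rw [div_lt_iff₀ (by positivity)] at h0
  rw [lt_div_iff₀ hq1] at h1
  refine ⟨by linarith, ?_⟩
  rw [lt_div_iff₀ hq1]
  nlinarith

theorem one_div_lt_one_div_mul_sub_one (hq1 : 1 < q) (hq_lt_two : q < 2) :
    1 / q < 1 / (q * (q - 1)) := by
  apply one_div_lt_one_div_of_lt (by nlinarith)
  nlinarith

theorem mul_sub_mem_Ioo_of_mem_switchRegion (hq1 : 1 < q) (hy : y ∈ switchRegion q)
    (d : Fin 2) : q * y - (d : ℕ) ∈ Ioo 0 (1 / (q - 1)) := by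
  obtain h | h : d = 0 ∨ d = 1 := by omega
  · simpa [h] using mul_mem_Ioo hq1 (hy.1.trans' (by positivity)) hy.2
  · have hvw : 1 / (q * (q - 1)) < 1 / (q - 1) :=
      one_div_lt_one_div_of_lt (by linarith) (by nlinarith)
    simpa [h] using mul_sub_one_mem_Ioo hq1 hy.1 (hy.2.trans hvw)

theorem switchStep_fst_mem (hq1 : 1 < q) (hq_lt_two : q < 2) {s : ℝ × (ℕ → Fin 2)}
    (hs : s.1 ∈ Ioo 0 (1 / (q - 1))) : (switchStep q s).1 ∈ Ioo 0 (1 / (q - 1)) := by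
  obtain ⟨y, b⟩ := s
  by_cases hS : y ∈ switchRegion q
  · rw [switchStep_of_mem b hS]
    exact mul_sub_mem_Ioo_of_mem_switchRegion hq1 hS (b 0)
  · rw [switchStep_of_notMem b hS]
    rcases le_or_gt y (1 / q) with hy | hy
    · rw [forcedMap_of_le hy]
      exact mul_mem_Ioo hq1 hs.1 (hy.trans_lt (one_div_lt_one_div_mul_sub_one hq1 hq_lt_two))
    · rw [forcedMap_of_lt hy]
      exact mul_sub_one_mem_Ioo hq1 hy hs.2

theorem notMem_switchRegion_iff :
    y ∉ switchRegion q ↔ y ≤ 1 / q ∨ 1 / (q * (q - 1)) ≤ y := by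
  simp only [switchRegion, mem_Ioo, not_and_or, not_lt]

theorem exists_iterate_forcedMap_mem_of_le (hq1 : 1 < q) (hgold : q ^ 2 < q + 1)
    (hy0 : 0 < y) (hy : y ≤ 1 / q) : ∃ m, (forcedMap q)^[m] y ∈ switchRegion q := by
  by_contra! hout
  have hq0 : 0 < q := by linarith
  have hv : 1 < 1 / (q * (q - 1)) := by rw [lt_div_iff₀ (by nlinarith)]; nlinarith
  have orbit : ∀ n, (forcedMap q)^[n] y ≤ 1 / q ∧ (forcedMap q)^[n] y = q ^ n * y := by
    intro n
    induction n with
    | zero => simpa using hy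
    | succ n ih =>
      have hnext := forcedMap_of_le ih.1
      have hle : q * (forcedMap q)^[n] y ≤ 1 := by
        rw [le_div_iff₀ hq0] at ih; linarith [ih.1]
      have hnotMem := hout (n + 1)
      rw [iterate_succ_apply', hnext] at hnotMem ⊢
      refine ⟨(notMem_switchRegion_iff.mp hnotMem).resolve_right (by linarith), ?_⟩
      rw [ih.2, pow_succ]
      ring
  obtain ⟨n, hn⟩ := pow_unbounded_of_one_lt (1 / q / y) hq1
  rw [div_lt_iff₀ hy0] at hn
  linarith [orbit n]

theorem exists_iterate_forcedMap_mem_of_ge (hq1 : 1 < q) (hgold : q ^ 2 < q + 1)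
    (hy : 1 / (q * (q - 1)) ≤ y) (hy1 : y < 1 / (q - 1)) :
    ∃ m, (forcedMap q)^[m] y ∈ switchRegion q := by
  by_contra! hout
  have hq0 : 0 < q := by linarith
  have hq1' : 0 < q - 1 := by linarith
  have hq_lt_two : q < 2 := by nlinarith
  have hw : q * (1 / (q - 1)) - 1 = 1 / (q - 1) := by field_simp; ring
  have hvw : q * (1 / (q * (q - 1))) = 1 / (q - 1) := by field_simp
  have hgap : 1 / q < 1 / (q - 1) - 1 := by
    rw [show 1 / (q - 1) - 1 = (2 - q) / (q - 1) by field_simp; ring,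
      div_lt_div_iff₀ hq0 hq1']
    nlinarith
  set w := 1 / (q - 1)
  have hv : 0 < 1 / (q * (q - 1)) := by positivity
  have orbit : ∀ n, 1 / (q * (q - 1)) ≤ (forcedMap q)^[n] y ∧
      w - (forcedMap q)^[n] y = q ^ n * (w - y) := by
    intro n
    induction n with
    | zero => simpa using hy
    | succ n ih =>
      have hnext :=
        forcedMap_of_lt ((one_div_lt_one_div_mul_sub_one hq1 hq_lt_two).trans_le ih.1)
      have hge : w ≤ q * (forcedMap q)^[n] y := by
        rw [← hvw]; exact mul_le_mul_of_nonneg_left ih.1 hq0.le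
      have hnotMem := hout (n + 1)
      rw [iterate_succ_apply', hnext] at hnotMem ⊢
      refine ⟨(notMem_switchRegion_iff.mp hnotMem).resolve_left (by linarith), ?_⟩
      rw [pow_succ]
      linear_combination q * ih.2 - hw
  obtain ⟨n, hn⟩ := pow_unbounded_of_one_lt (w / (w - y)) hq1
  rw [div_lt_iff₀ (by linarith)] at hn
  linarith [orbit n]

theorem exists_iterate_forcedMap_mem (hq1 : 1 < q) (hgold : q ^ 2 < q + 1)
    (hy : y ∈ Ioo 0 (1 / (q - 1))) : ∃ m, (forcedMap q)^[m] y ∈ switchRegion q := by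
  by_cases hS : y ∈ switchRegion q
  · exact ⟨0, hS⟩
  rcases notMem_switchRegion_iff.mp hS with hlow | hhigh
  · exact exists_iterate_forcedMap_mem_of_le hq1 hgold hy.1 hlow
  · exact exists_iterate_forcedMap_mem_of_ge hq1 hgold hhigh hy.2

theorem exists_iterate_switchStep_eq (hq1 : 1 < q) (hgold : q ^ 2 < q + 1)
    (hy : y ∈ Ioo 0 (1 / (q - 1))) :
    ∃ m, ∃ z ∈ switchRegion q, ∀ b, (switchStep q)^[m] (y, b) = (z, b) := by
  classical
  have hex := exists_iterate_forcedMap_mem hq1 hgold hy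
  refine ⟨Nat.find hex, _, Nat.find_spec hex, fun b => ?_⟩
  have before_switch : ∀ i ≤ Nat.find hex,
      (switchStep q)^[i] (y, b) = ((forcedMap q)^[i] y, b) := by
    intro i hi
    induction i with
    | zero => rfl
    | succ i ih =>
      rw [iterate_succ_apply', iterate_succ_apply', ih (by omega),
        switchStep_of_notMem b (Nat.find_min hex (by omega))]
  exact before_switch _ le_rfl

theorem head_eq_and_exists_tail_eq_of_switchExpansion_eq (hq1 : 1 < q)
    (hgold : q ^ 2 < q + 1) (hy : y ∈ Ioo 0 (1 / (q - 1))) {b b' : ℕ → Fin 2}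
    (h : switchExpansion q (y, b) = switchExpansion q (y, b')) :
    b 0 = b' 0 ∧ ∃ z ∈ Ioo 0 (1 / (q - 1)),
      switchExpansion q (z, fun n => b (n + 1)) = switchExpansion q (z, fun n => b' (n + 1)) := by
  obtain ⟨m, z, hz, hiter⟩ := exists_iterate_switchStep_eq hq1 hgold hy
  have hhead : b 0 = b' 0 := by
    simpa [switchExpansion, hiter, switchDigit, hz] using congrFun h m
  refine ⟨hhead, _, mul_sub_mem_Ioo_of_mem_switchRegion hq1 hz (b 0), funext fun k => ?_⟩
  have hk := congrFun h (k + (m + 1))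
  rwa [switchExpansion_add, switchExpansion_add, iterate_succ_apply', iterate_succ_apply', hiter,
    hiter, switchStep_of_mem _ hz, switchStep_of_mem _ hz, ← hhead] at hk

theorem switchExpansion_injective (hq1 : 1 < q) (hgold : q ^ 2 < q + 1)
    (hy : y ∈ Ioo 0 (1 / (q - 1))) : Injective fun b => switchExpansion q (y, b) := by
  intro b b' h
  funext n
  induction n generalizing y b b' with
  | zero => exact (head_eq_and_exists_tail_eq_of_switchExpansion_eq hq1 hgold hy h).1
  | succ n ih =>
    obtain ⟨-, z, hz, htail⟩ := head_eq_and_exists_tail_eq_of_switchExpansion_eq hq1 hgold hy h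
    exact ih hz htail

theorem hasSum_switchExpansion (hq1 : 1 < q) (hq_lt_two : q < 2) {s : ℝ × (ℕ → Fin 2)}
    (hs : s.1 ∈ Ioo 0 (1 / (q - 1))) :
    HasSum (fun n => ((switchExpansion q s n : ℕ) : ℝ) / q ^ (n + 1)) s.1 := by
  have hmem : ∀ n, ((switchStep q)^[n] s).1 ∈ Ioo 0 (1 / (q - 1)) := by
    intro n
    induction n with
    | zero => exact hs
    | succ n ih => rw [iterate_succ_apply']; exact switchStep_fst_mem hq1 hq_lt_two ih
  refine hasSum_div_pow_of_orbit (y := fun n => ((switchStep q)^[n] s).1) hq1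
    (fun n => Nat.cast_nonneg _) (fun n => by rw [iterate_succ_apply']; rfl)
    (fun n => abs_le.mpr ⟨?_, (hmem n).2.le⟩)
  linarith [(hmem n).1, (hmem 0).1.trans (hmem 0).2]

end QExpansion

open QExpansion

/-- If `1 < q < φ` (the Golden ratio), then every `x ∈ (0, 1/(q-1))` has a continuum
of expansions `x = Σ_{i=1}^∞ c_i q^{-i}` with digits `c_i ∈ {0,1}`. -/
theorem stmt_2 (q : ℝ) (hq1 : 1 < q) (hq2 : q < (1 + Real.sqrt 5) / 2)
    (x : ℝ) (hx1 : 0 < x) (hx2 : x < 1 / (q - 1)) :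
    Cardinal.mk {c : ℕ → Fin 2 // x = ∑' i : ℕ, ((c i : ℕ) : ℝ) / q ^ (i + 1)} =
      Cardinal.continuum := by
  have hgold : q ^ 2 < q + 1 := sq_lt_add_one_of_lt_goldenRatio (by linarith) hq2
  have hq_lt_two : q < 2 := by nlinarith
  have hx : x ∈ Ioo 0 (1 / (q - 1)) := ⟨hx1, hx2⟩
  refine le_antisymm ((Cardinal.mk_subtype_le _).trans_eq (by simp)) ?_
  calc Cardinal.continuum = Cardinal.mk (ℕ → Fin 2) := by simp
    _ ≤ _ := Cardinal.mk_le_of_injective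
      (f := fun b => ⟨switchExpansion q (x, b),
        (hasSum_switchExpansion (s := (x, b)) hq1 hq_lt_two hx).tsum_eq.symm⟩)
      fun b b' h => switchExpansion_injective hq1 hgold hx (congrArg Subtype.val h)
end

section
/- Let (p_i)_{i≥1} be a sequence of positive real numbers satisfying: (i) p_i → 0; (ii) p_n < Σ_{i=n+1}^∞ p_i for all n ≥ 1; (iii) p_{n−1} < Σ_{i=n+1}^∞ p_i for infinitely many n; (iv) p_n ≤ 2 p_{n+1} for all sufficiently large n. Assume the series converges and set S = Σ_{i=1}^∞ p_i. Then for every x with 0 < x < S, the set of sequences (c_i) ∈ {0,1}^ℕ satisfying x = Σ_{i=1}^∞ c_i p_i has the cardinality of the continuum. -/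
/-!
Put `w i = p (i + 1)` and `R k = ∑_{i ≥ k} w i`. Call a digit sequence admissible when every
remainder `x - ∑_{i < k} c i * w i` lies in `(0, R k)`. Admissible sequences are expansions of `x`,
and since `w k < R (k + 1)` the greedy algorithm (take a one iff `w k` is below the remainder)
extends any admissible prefix to an admissible sequence. Conditions (iii) and (iv) force every
greedy path to reach a position where both digits keep the remainder admissible, so every
admissible sequence has other admissible sequences arbitrarily close to it in Cantor space. The
closure of the admissible sequences is thus a nonempty perfect subset of the closed set of
expansions of `x`, hence contains a copy of the Cantor space.
-/

open Filter Finset Topology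

namespace WeightedExpansion

variable {w : ℕ → ℝ} {x : ℝ} {c c' : ℕ → Fin 2} {k N : ℕ}

noncomputable def tailSum (w : ℕ → ℝ) (k : ℕ) : ℝ := ∑' i, w (i + k)

def remainder (w : ℕ → ℝ) (x : ℝ) (c : ℕ → Fin 2) (k : ℕ) : ℝ :=
  x - ∑ i ∈ range k, ((c i : ℕ) : ℝ) * w i

/-- For positive weights these are the expansions of `x` with infinitely many zeros and
infinitely many ones. -/
def IsAdmissible (w : ℕ → ℝ) (x : ℝ) (c : ℕ → Fin 2) : Prop :=
  ∀ k, 0 < remainder w x c k ∧ remainder w x c k < tailSum w k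

def IsGreedyFrom (w : ℕ → ℝ) (x : ℝ) (c : ℕ → Fin 2) (N : ℕ) : Prop :=
  ∀ k, N ≤ k → c k = if w k < remainder w x c k then 1 else 0

theorem tailSum_eq_add (hs : Summable w) (k : ℕ) : tailSum w k = w k + tailSum w (k + 1) := by
  rw [tailSum, ((summable_nat_add_iff k).mpr hs).tsum_eq_zero_add, tailSum]
  simp only [zero_add, add_right_comm _ 1 k, add_assoc]

theorem tendsto_tailSum : Tendsto (tailSum w) atTop (𝓝 0) :=
  tendsto_sum_nat_add w

@[simp]
theorem remainder_zero : remainder w x c 0 = x := by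
  simp [remainder]

theorem remainder_succ (k : ℕ) :
    remainder w x c (k + 1) = remainder w x c k - ((c k : ℕ) : ℝ) * w k := by
  simp only [remainder, sum_range_succ]
  ring

theorem remainder_succ_of_eq_zero (h : c k = 0) : remainder w x c (k + 1) = remainder w x c k := by
  simp [remainder_succ, h]

theorem remainder_succ_of_eq_one (h : c k = 1) :
    remainder w x c (k + 1) = remainder w x c k - w k := by
  simp [remainder_succ, h]

theorem remainder_congr (h : ∀ i < k, c i = c' i) : remainder w x c k = remainder w x c' k := by
  simp only [remainder]
  congr 1
  exact sum_congr rfl fun i hi => by rw [h i (mem_range.mp hi)]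

theorem fin_two_eq_zero_or_eq_one (a : Fin 2) : a = 0 ∨ a = 1 := by
  omega

theorem norm_digit_mul_le (a : Fin 2) (r : ℝ) : ‖((a : ℕ) : ℝ) * r‖ ≤ |r| := by
  rcases fin_two_eq_zero_or_eq_one a with rfl | rfl <;> simp

theorem summable_digits_mul (hs : Summable w) (c : ℕ → Fin 2) :
    Summable fun i => ((c i : ℕ) : ℝ) * w i :=
  hs.abs.of_norm_bounded fun i => norm_digit_mul_le (c i) (w i)

theorem IsAdmissible.hasSum (hc : IsAdmissible w x c) (hs : Summable w) :
    HasSum (fun i => ((c i : ℕ) : ℝ) * w i) x := by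
  rw [(summable_digits_mul hs c).hasSum_iff_tendsto_nat]
  have hrem : Tendsto (remainder w x c) atTop (𝓝 0) :=
    tendsto_of_tendsto_of_tendsto_of_le_of_le tendsto_const_nhds tendsto_tailSum
      (fun k => (hc k).1.le) fun k => (hc k).2.le
  simpa [remainder] using (tendsto_const_nhds (x := x)).sub hrem

/-- Along a run of zeros the remainder is constant, while it stays below `tailSum w k → 0`. -/
theorem IsAdmissible.frequently_eq_one (hc : IsAdmissible w x c) : ∃ᶠ k in atTop, c k = 1 := by
  intro hev
  obtain ⟨J, hJ⟩ := eventually_atTop.mp hev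
  have hconst : ∀ k ≥ J, remainder w x c k = remainder w x c J := by
    intro k hk
    induction k, hk using Nat.le_induction with
    | base => rfl
    | succ k hk ih => rw [remainder_succ_of_eq_zero (by have := hJ k hk; omega), ih]
  have : remainder w x c J ≤ 0 :=
    ge_of_tendsto tendsto_tailSum (eventually_atTop.mpr ⟨J, fun k hk => hconst k hk ▸ (hc k).2.le⟩)
  linarith [(hc J).1]

/-- Along a run of ones `remainder - tailSum` is constant and negative, while the remainder
stays positive. -/
theorem IsAdmissible.frequently_eq_zero (hc : IsAdmissible w x c) (hs : Summable w) :
    ∃ᶠ k in atTop, c k = 0 := by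
  intro hev
  obtain ⟨J, hJ⟩ := eventually_atTop.mp hev
  have hconst : ∀ k ≥ J, remainder w x c k - tailSum w k = remainder w x c J - tailSum w J := by
    intro k hk
    induction k, hk using Nat.le_induction with
    | base => rfl
    | succ k hk ih =>
      rw [remainder_succ_of_eq_one (by have := hJ k hk; omega), ← ih, tailSum_eq_add hs k]
      ring
  have : tailSum w J - remainder w x c J ≤ 0 :=
    ge_of_tendsto tendsto_tailSum
      (eventually_atTop.mpr ⟨J, fun k hk => by linarith [hconst k hk, (hc k).1]⟩)
  linarith [(hc J).2]

theorem IsGreedyFrom.remainder_le_of_eq_zero (hg : IsGreedyFrom w x c N) (hk : N ≤ k)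
    (h : c k = 0) : remainder w x c k ≤ w k := by
  have := hg k hk
  split_ifs at this with hlt
  · rw [h] at this; exact absurd this (by decide)
  · exact not_lt.mp hlt

theorem IsGreedyFrom.lt_remainder_of_eq_one (hg : IsGreedyFrom w x c N) (hk : N ≤ k)
    (h : c k = 1) : w k < remainder w x c k := by
  have := hg k hk
  split_ifs at this with hlt
  · exact hlt
  · rw [h] at this; exact absurd this (by decide)

theorem remainder_succ_mem_of_greedy (hlt : w k < tailSum w (k + 1)) (hs : Summable w)
    (h : 0 < remainder w x c k ∧ remainder w x c k < tailSum w k)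
    (hc : c k = if w k < remainder w x c k then 1 else 0) :
    0 < remainder w x c (k + 1) ∧ remainder w x c (k + 1) < tailSum w (k + 1) := by
  have htail := tailSum_eq_add hs k
  split_ifs at hc with hk
  · rw [remainder_succ_of_eq_one hc]
    constructor <;> linarith
  · rw [remainder_succ_of_eq_zero hc]
    constructor <;> linarith

noncomputable def greedyDigit (w : ℕ → ℝ) (c : ℕ → Fin 2) (N k : ℕ) (y : ℝ) : Fin 2 :=
  if k < N then c k else if w k < y then 1 else 0

noncomputable def greedyRemainder (w : ℕ → ℝ) (x : ℝ) (c : ℕ → Fin 2) (N : ℕ) : ℕ → ℝ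
  | 0 => x
  | k + 1 => greedyRemainder w x c N k -
      ((greedyDigit w c N k (greedyRemainder w x c N k) : ℕ) : ℝ) * w k

noncomputable def greedyExtend (w : ℕ → ℝ) (x : ℝ) (c : ℕ → Fin 2) (N k : ℕ) : Fin 2 :=
  greedyDigit w c N k (greedyRemainder w x c N k)

theorem remainder_greedyExtend (k : ℕ) :
    remainder w x (greedyExtend w x c N) k = greedyRemainder w x c N k := by
  induction k with
  | zero => simp [greedyRemainder]
  | succ k ih => rw [remainder_succ, ih]; rfl

theorem greedyExtend_of_lt (hk : k < N) : greedyExtend w x c N k = c k := by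
  simp [greedyExtend, greedyDigit, hk]

theorem isGreedyFrom_greedyExtend : IsGreedyFrom w x (greedyExtend w x c N) N := by
  intro k hk
  rw [remainder_greedyExtend]
  simp [greedyExtend, greedyDigit, not_lt.mpr hk]

theorem exists_admissible_greedy_extension (hlt : ∀ k, w k < tailSum w (k + 1))
    (hs : Summable w) (hc : ∀ k ≤ N, 0 < remainder w x c k ∧ remainder w x c k < tailSum w k) :
    ∃ g, IsAdmissible w x g ∧ IsGreedyFrom w x g N ∧ ∀ i < N, g i = c i := by
  have hagree : ∀ i < N, greedyExtend w x c N i = c i := fun i hi => greedyExtend_of_lt hi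
  refine ⟨greedyExtend w x c N, fun k => ?_, isGreedyFrom_greedyExtend, hagree⟩
  rcases le_total k N with hk | hk
  · rw [remainder_congr fun i hi => hagree i (by omega)]
    exact hc k hk
  · induction k, hk using Nat.le_induction with
    | base => rw [remainder_congr hagree]; exact hc N le_rfl
    | succ k hk ih =>
      exact remainder_succ_mem_of_greedy (hlt k) hs ih (isGreedyFrom_greedyExtend k hk)

theorem remainder_succ_le_of_eq_zero {z : ℕ} (hdouble : ∀ k ≥ z, w k ≤ 2 * w (k + 1))
    (hzero : ∀ k ≥ z, c k = 0 → remainder w x c k ≤ w k) (hz : c z = 0) :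
    ∀ k ≥ z, remainder w x c (k + 1) ≤ w k := by
  intro k hk
  induction k, hk using Nat.le_induction with
  | base => rw [remainder_succ_of_eq_zero hz]; exact hzero z le_rfl hz
  | succ k hk ih =>
    rcases fin_two_eq_zero_or_eq_one (c (k + 1)) with h | h
    · rw [remainder_succ_of_eq_zero h]; exact hzero (k + 1) (by omega) h
    · rw [remainder_succ_of_eq_one h]; linarith [hdouble k hk]

theorem tailSum_sub_le_remainder_succ_of_eq_one {j : ℕ} (hs : Summable w)
    (hdouble : ∀ k ≥ j, w k ≤ 2 * w (k + 1))
    (hone : ∀ k ≥ j, c k = 1 → tailSum w (k + 1) ≤ remainder w x c k) (hj : c j = 1) :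
    ∀ k ≥ j, tailSum w (k + 1) - w k ≤ remainder w x c (k + 1) := by
  intro k hk
  induction k, hk using Nat.le_induction with
  | base => rw [remainder_succ_of_eq_one hj]; linarith [hone j le_rfl hj]
  | succ k hk ih =>
    rcases fin_two_eq_zero_or_eq_one (c (k + 1)) with h | h
    · rw [remainder_succ_of_eq_zero h]
      linarith [hdouble k hk, tailSum_eq_add hs (k + 1)]
    · rw [remainder_succ_of_eq_one h]
      linarith [hone (k + 1) (by omega) h]

/-- At the position `m` both digits keep the remainder admissible. If there were none, every
greedy one at `k` would satisfy `tailSum w (k + 1) ≤ remainder`; past the doubling threshold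
this gives `tailSum w (k + 1) - w k ≤ remainder (k + 1)` from the first one on, while
`remainder (k + 1) ≤ w k` holds from the first zero on. At a `k` with
`w k < tailSum w (k + 2)` the lower bound forces a one at `k + 1`, so
`w k < tailSum w (k + 2) ≤ remainder (k + 1)`, against the upper bound. -/
theorem IsAdmissible.exists_branch_point {N₀ : ℕ} (hc : IsAdmissible w x c)
    (hg : IsGreedyFrom w x c N) (hs : Summable w) (hdouble : ∀ k ≥ N₀, w k ≤ 2 * w (k + 1))
    (hinf : ∀ n, ∃ k ≥ n, w k < tailSum w (k + 2)) :
    ∃ m ≥ N, w m < remainder w x c m ∧ remainder w x c m < tailSum w (m + 1) := by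
  by_contra! hforced
  obtain ⟨z, hz, hcz⟩ := frequently_atTop.mp (hc.frequently_eq_zero hs) (max N N₀)
  obtain ⟨j, hj, hcj⟩ := frequently_atTop.mp hc.frequently_eq_one (max N N₀)
  have hupper := remainder_succ_le_of_eq_zero (fun k hk => hdouble k (by omega))
    (fun k hk => hg.remainder_le_of_eq_zero (by omega)) hcz
  have hlower := tailSum_sub_le_remainder_succ_of_eq_one hs (fun k hk => hdouble k (by omega))
    (fun k hk h => hforced k (by omega) (hg.lt_remainder_of_eq_one (by omega) h)) hcj
  obtain ⟨K, hK, hKlt⟩ := hinf (max z j)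
  have h₁ := hupper K (by omega)
  have h₂ := hlower K (by omega)
  have h₃ := hforced (K + 1) (by omega) (by linarith [tailSum_eq_add hs (K + 1)])
  linarith

theorem IsAdmissible.exists_ne_mem_cylinder {N₀ : ℕ} (hc : IsAdmissible w x c) (hs : Summable w)
    (hlt : ∀ k, w k < tailSum w (k + 1)) (hdouble : ∀ k ≥ N₀, w k ≤ 2 * w (k + 1))
    (hinf : ∀ n, ∃ k ≥ n, w k < tailSum w (k + 2)) (N : ℕ) :
    ∃ c', IsAdmissible w x c' ∧ c' ≠ c ∧ c' ∈ PiNat.cylinder c N := by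
  obtain ⟨g, hg, hgreedy, hgc⟩ := exists_admissible_greedy_extension (N := N) hlt hs fun k _ => hc k
  obtain ⟨m, hmN, hm₁, hm₂⟩ := hg.exists_branch_point hgreedy hs hdouble hinf
  have hbranch : ∀ b : Fin 2, ∃ e, IsAdmissible w x e ∧ e m = b ∧ ∀ i < N, e i = c i := by
    intro b
    have hupd : ∀ i < m, Function.update g m b i = g i := fun i hi =>
      Function.update_of_ne (by omega) _ _
    have hprefix : ∀ k ≤ m + 1, 0 < remainder w x (Function.update g m b) k ∧
        remainder w x (Function.update g m b) k < tailSum w k := by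
      intro k hk
      rcases Nat.lt_or_eq_of_le hk with hk | rfl
      · rw [remainder_congr fun i hi => hupd i (by omega)]
        exact hg k
      · rw [remainder_succ, remainder_congr hupd, Function.update_self]
        have := tailSum_eq_add hs m
        rcases fin_two_eq_zero_or_eq_one b with rfl | rfl
        · simp only [Fin.val_zero, Nat.cast_zero, zero_mul, sub_zero]
          exact ⟨(hg m).1, hm₂⟩
        · simp only [Fin.val_one, Nat.cast_one, one_mul]
          constructor <;> linarith [(hg m).2]
    obtain ⟨e, he, -, hee⟩ := exists_admissible_greedy_extension hlt hs hprefix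
    refine ⟨e, he, by rw [hee m (by omega), Function.update_self], fun i hi => ?_⟩
    rw [hee i (by omega), hupd i (by omega), hgc i hi]
  obtain ⟨e, he, hem, hec⟩ := hbranch (if c m = 0 then 1 else 0)
  refine ⟨e, he, fun h => ?_, PiNat.mem_cylinder_iff.mpr hec⟩
  subst h
  split_ifs at hem <;> omega

theorem preperfect_setOf_isAdmissible {N₀ : ℕ} (hs : Summable w)
    (hlt : ∀ k, w k < tailSum w (k + 1)) (hdouble : ∀ k ≥ N₀, w k ≤ 2 * w (k + 1))
    (hinf : ∀ n, ∃ k ≥ n, w k < tailSum w (k + 2)) :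
    Preperfect {c | IsAdmissible w x c} := by
  rw [preperfect_iff_nhds]
  intro c hc U hU
  obtain ⟨-, ⟨y, N, rfl⟩, hcy, hU⟩ :=
    (PiNat.isTopologicalBasis_cylinders fun _ : ℕ => Fin 2).mem_nhds_iff.mp hU
  obtain ⟨c', hc', hne, hcyl⟩ := hc.exists_ne_mem_cylinder hs hlt hdouble hinf N
  refine ⟨c', ⟨hU ?_, hc'⟩, hne⟩
  rwa [← PiNat.mem_cylinder_iff_eq.mp hcy]

theorem isClosed_setOf_eq_tsum (hs : Summable w) (x : ℝ) :
    IsClosed {c : ℕ → Fin 2 | x = ∑' i, ((c i : ℕ) : ℝ) * w i} := by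
  refine isClosed_eq continuous_const (continuous_tsum (fun i => ?_) hs.abs fun i c => ?_)
  · exact ((continuous_of_discreteTopology (f := fun a : Fin 2 => ((a : ℕ) : ℝ))).comp
      (continuous_apply i)).mul continuous_const
  · exact norm_digit_mul_le (c i) (w i)

theorem mk_expansions_eq_continuum {N₀ : ℕ} (hs : Summable w)
    (hlt : ∀ k, w k < tailSum w (k + 1)) (hdouble : ∀ k ≥ N₀, w k ≤ 2 * w (k + 1))
    (hinf : ∀ n, ∃ k ≥ n, w k < tailSum w (k + 2)) (hx₀ : 0 < x) (hx : x < tailSum w 0) :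
    Cardinal.mk {c : ℕ → Fin 2 // x = ∑' i, ((c i : ℕ) : ℝ) * w i} = Cardinal.continuum := by
  obtain ⟨c₀, hc₀, -, -⟩ := exists_admissible_greedy_extension (c := fun _ => 0) (N := 0) hlt hs
    fun k hk => by obtain rfl := Nat.le_zero.mp hk; simpa using ⟨hx₀, hx⟩
  have hperfect := (preperfect_setOf_isAdmissible (x := x) hs hlt hdouble hinf).perfect_closure
  have hsub : closure {c | IsAdmissible w x c} ⊆ {c | x = ∑' i, ((c i : ℕ) : ℝ) * w i} :=
    (isClosed_setOf_eq_tsum hs x).closure_subset_iff.mpr fun c hc => (hc.hasSum hs).tsum_eq.symm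
  let := @PiNat.metricSpace (fun _ : ℕ => Fin 2) _ _
  have := @PiNat.completeSpace (fun _ : ℕ => Fin 2) _ _
  obtain ⟨f, hfE, -, hf⟩ := hperfect.exists_nat_bool_injection ⟨c₀, subset_closure hc₀⟩
  have hinj : Function.Injective fun b =>
      (⟨f b, hsub (hfE ⟨b, rfl⟩)⟩ : {c : ℕ → Fin 2 // x = ∑' i, ((c i : ℕ) : ℝ) * w i}) :=
    fun a b h => hf (congrArg Subtype.val h)
  apply le_antisymm
  · exact (Cardinal.mk_subtype_le _).trans (by simp)
  · exact (by simp : Cardinal.continuum ≤ Cardinal.mk (ℕ → Bool)).trans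
      (Cardinal.mk_le_of_injective hinj)

end WeightedExpansion

open WeightedExpansion

theorem stmt_3_general (p : ℕ → ℝ) (S : ℝ)
    (hsum : Summable (fun i => p (i + 1)))
    (h2 : ∀ n, 1 ≤ n → p n < ∑' i : ℕ, p (n + 1 + i))
    (h3 : ∀ N, ∃ n, N ≤ n ∧ 2 ≤ n ∧ p (n - 1) < ∑' i : ℕ, p (n + 1 + i))
    (h4 : ∃ N, ∀ n, N ≤ n → p n ≤ 2 * p (n + 1))
    (hS : S = ∑' i : ℕ, p (i + 1))
    (x : ℝ) (hx1 : 0 < x) (hx2 : x < S) :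
    Cardinal.mk {c : ℕ → Fin 2 // x = ∑' i : ℕ, ((c i : ℕ) : ℝ) * p (i + 1)} =
      Cardinal.continuum := by
  have htail : ∀ k, tailSum (fun i => p (i + 1)) k = ∑' i, p (k + 1 + i) := fun k =>
    tsum_congr fun i => by rw [add_right_comm, add_comm i]
  obtain ⟨N₀, hdouble⟩ := h4
  refine mk_expansions_eq_continuum (N₀ := N₀) hsum
    (fun k => htail (k + 1) ▸ h2 (k + 1) (by omega)) (fun k hk => hdouble (k + 1) (by omega))
    (fun n => ?_) hx1 (by simpa [tailSum, hS] using hx2)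
  obtain ⟨m, hm, -, hlt⟩ := h3 (n + 2)
  refine ⟨m - 2, by omega, ?_⟩
  rw [show m - 2 + 2 = m by omega, htail, show m - 2 + 1 = m - 1 by omega]
  exact hlt

/-- If `(p_i)_{i ≥ 1}` is a positive sequence with `p_i → 0`,
`p_n < Σ_{i=n+1}^∞ p_i` for all `n ≥ 1`, `p_{n-1} < Σ_{i=n+1}^∞ p_i` for infinitely
many `n`, and `p_n ≤ 2 p_{n+1}` for all sufficiently large `n`, with convergent sum `S`,
then every `x ∈ (0, S)` has a continuum of expansions `x = Σ c_i p_i`, `c_i ∈ {0,1}`. -/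
theorem stmt_3 (p : ℕ → ℝ) (S : ℝ)
    (hpos : ∀ i, 1 ≤ i → 0 < p i)
    (hlim : Filter.Tendsto p Filter.atTop (nhds 0))
    (hsum : Summable (fun i => p (i + 1)))
    (h2 : ∀ n, 1 ≤ n → p n < ∑' i : ℕ, p (n + 1 + i))
    (h3 : ∀ N, ∃ n, N ≤ n ∧ 2 ≤ n ∧ p (n - 1) < ∑' i : ℕ, p (n + 1 + i))
    (h4 : ∃ N, ∀ n, N ≤ n → p n ≤ 2 * p (n + 1))
    (hS : S = ∑' i : ℕ, p (i + 1))
    (x : ℝ) (hx1 : 0 < x) (hx2 : x < S) :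
    Cardinal.mk {c : ℕ → Fin 2 // x = ∑' i : ℕ, ((c i : ℕ) : ℝ) * p (i + 1)} =
      Cardinal.continuum :=
  stmt_3_general p S hsum h2 h3 h4 hS x hx1 hx2
end

section
/- Let (F_i) be the Fibonacci sequence with F_1 = F_2 = 1 and F_{i+2} = F_{i+1} + F_i, and let S = Σ_{i=1}^∞ 1/F_i. Then for every x ∈ (0, S), the set of sequences (c_i) ∈ {0,1}^ℕ satisfying x = Σ_{i=1}^∞ c_i / F_i has the cardinality of the continuum. -/
/-!
Write `a i = 1 / F (i + 1)` and `T n = ∑_{i ≥ n} a i`. A digit sequence which is not eventually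
constant has every tail value strictly inside `(0, T n)`. Conversely, an open remainder
`r ∈ (0, T n)` at position `n` has two distinct expansions of this kind: after finitely many
forced digits one reaches a position `q` with `a q < r' < T (q + 1)`, where both digits extend.
That forced runs end uses only `a n + a (n + 2) < T (n + 1)` and, for even `n`,
`a n < T (n + 2)`; the latter follows from Cassini's identity. So the non-eventually-constant
expansions of `x` form a nonempty preperfect subset of the Cantor space `ℕ → Fin 2`, and the
closure of such a set is a perfect set of expansions, of cardinality `𝔠`.
-/

open Filter Topology Set Finset

open Cardinal in
lemma Preperfect.continuum_le_mk_closure {α : Type*} [TopologicalSpace α]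
    [TopologicalSpace.IsCompletelyMetrizableSpace α] {s : Set α} (hs : Preperfect s)
    (hne : s.Nonempty) : 𝔠 ≤ #(closure s) := by
  let := TopologicalSpace.upgradeIsCompletelyMetrizable α
  obtain ⟨f, hf, -, hinj⟩ := hs.perfect_closure.exists_nat_bool_injection hne.closure
  have hinj' : Function.Injective fun b => (⟨f b, hf ⟨b, rfl⟩⟩ : closure s) :=
    fun b b' h => hinj (congrArg Subtype.val h)
  simpa using lift_mk_le_lift_mk_of_injective hinj'

namespace DigitExpansion

variable {a : ℕ → ℝ} {n : ℕ} {r : ℝ}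

noncomputable def tailSum (a : ℕ → ℝ) (n : ℕ) : ℝ := ∑' i, a (i + n)

def nonconstExpansions (a : ℕ → ℝ) (n : ℕ) (r : ℝ) : Set (ℕ → Fin 2) :=
  {d | HasSum (fun i => ((d i : ℕ) : ℝ) * a (i + n)) r ∧ ¬EventuallyConst d atTop}

def prepend (w : ℕ → Fin 2) (N : ℕ) (d : ℕ → Fin 2) : ℕ → Fin 2 :=
  fun i => if i < N then w i else d (i - N)

@[simp]
lemma prepend_add (w : ℕ → Fin 2) (N : ℕ) (d : ℕ → Fin 2) (i : ℕ) :
    prepend w N d (i + N) = d i := by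
  simp [prepend]

lemma prepend_of_lt (w : ℕ → Fin 2) {N i : ℕ} (d : ℕ → Fin 2) (hi : i < N) :
    prepend w N d i = w i :=
  if_pos hi

lemma prepend_injective (w : ℕ → Fin 2) (N : ℕ) : Function.Injective (prepend w N) :=
  fun d d' h => funext fun i => by simpa using congrFun h (i + N)

lemma eventuallyConst_comp_add_iff {α : Type*} [Nonempty α] {f : ℕ → α} (N : ℕ) :
    EventuallyConst (fun i => f (i + N)) atTop ↔ EventuallyConst f atTop := by
  simp only [eventuallyConst_iff_tendsto, tendsto_add_atTop_iff_nat]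

lemma digit_le_one (b : Fin 2) : ((b : ℕ) : ℝ) ≤ 1 := by
  exact_mod_cast Nat.lt_succ_iff.mp b.isLt

lemma tailSum_eq_add (hs : Summable a) (n : ℕ) : tailSum a n = a n + tailSum a (n + 1) := by
  rw [tailSum, ((summable_nat_add_iff n).2 hs).tsum_eq_zero_add, zero_add, tailSum]
  simp only [add_right_comm _ 1 n, add_assoc]

lemma tendsto_tailSum : Tendsto (tailSum a) atTop (𝓝 0) :=
  tendsto_sum_nat_add a

lemma hasSum_tailSum (hs : Summable a) (n : ℕ) : HasSum (fun i => a (i + n)) (tailSum a n) :=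
  ((summable_nat_add_iff n).2 hs).hasSum

lemma hasSum_digits_tail {d : ℕ → Fin 2}
    (hd : HasSum (fun i => ((d i : ℕ) : ℝ) * a (i + n)) r) (N : ℕ) :
    HasSum (fun i => ((d (i + N) : ℕ) : ℝ) * a (i + (n + N)))
      (r - ∑ i ∈ range N, ((d i : ℕ) : ℝ) * a (i + n)) := by
  simpa only [add_assoc, add_comm N n] using (hasSum_nat_add_iff' N).2 hd

lemma prepend_mem_nonconstExpansions (w : ℕ → Fin 2) {N : ℕ} {d : ℕ → Fin 2}
    (hd : d ∈ nonconstExpansions a (n + N) r) :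
    prepend w N d ∈
      nonconstExpansions a n (r + ∑ i ∈ range N, ((w i : ℕ) : ℝ) * a (i + n)) := by
  refine ⟨?_, ?_⟩
  · have hsum : ∑ i ∈ range N, ((prepend w N d i : ℕ) : ℝ) * a (i + n) =
        ∑ i ∈ range N, ((w i : ℕ) : ℝ) * a (i + n) :=
      sum_congr rfl fun i hi => by rw [prepend_of_lt w d (mem_range.1 hi)]
    rw [← hsum, ← hasSum_nat_add_iff]
    simpa only [prepend_add, add_assoc, add_comm N n] using hd.1
  · rw [← eventuallyConst_comp_add_iff N]
    simpa only [prepend_add] using hd.2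

lemma mem_nonconstExpansions_tail {d : ℕ → Fin 2} (hd : d ∈ nonconstExpansions a n r)
    (N : ℕ) :
    (fun i => d (i + N)) ∈
      nonconstExpansions a (n + N) (r - ∑ i ∈ range N, ((d i : ℕ) : ℝ) * a (i + n)) :=
  ⟨hasSum_digits_tail hd.1 N, by rw [eventuallyConst_comp_add_iff N]; exact hd.2⟩

lemma rev_mem_nonconstExpansions (hs : Summable a) {d : ℕ → Fin 2}
    (hd : d ∈ nonconstExpansions a n r) :
    Fin.rev ∘ d ∈ nonconstExpansions a n (tailSum a n - r) := by
  refine ⟨?_, fun h => hd.2 ?_⟩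
  · have hrev : ∀ i, (((d i).rev : ℕ) : ℝ) = 1 - ((d i : ℕ) : ℝ) := fun i => by
      rw [eq_sub_iff_add_eq, Fin.val_rev]
      exact_mod_cast (by omega : 2 - ((d i : ℕ) + 1) + (d i : ℕ) = 1)
    simpa only [Function.comp_apply, hrev, sub_mul, one_mul] using
      (hasSum_tailSum hs n).sub hd.1
  · simpa [Function.comp_def] using h.comp Fin.rev

lemma mem_Ioo_of_mem_nonconstExpansions (ha : ∀ n, 0 < a n) (hs : Summable a) {d : ℕ → Fin 2}
    (hd : d ∈ nonconstExpansions a n r) : r ∈ Ioo 0 (tailSum a n) := by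
  have hconst : ∀ b : Fin 2, ∃ i, d i ≠ b := fun b => by
    by_contra! h
    exact hd.2 (by rw [funext h]; exact .const b)
  obtain ⟨i, hi⟩ := hconst 0
  obtain ⟨j, hj⟩ := hconst 1
  have hi : (d i : ℕ) = 1 := by omega
  have hj : (d j : ℕ) = 0 := by omega
  constructor
  · refine hasSum_lt (f := 0) (i := i) (fun k => ?_) ?_ hasSum_zero hd.1
    · exact mul_nonneg (Nat.cast_nonneg _) (ha _).le
    · simp [hi, ha (i + n)]
  · refine hasSum_lt (i := j) (fun k => ?_) ?_ hd.1 (hasSum_tailSum hs n)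
    · exact mul_le_of_le_one_left (ha _).le (digit_le_one _)
    · simp [hj, ha (j + n)]

noncomputable def greedyRem (a : ℕ → ℝ) (n : ℕ) (r : ℝ) : ℕ → ℝ
  | 0 => r
  | k + 1 => if a (k + n) < greedyRem a n r k then greedyRem a n r k - a (k + n)
      else greedyRem a n r k

noncomputable def greedyDigits (a : ℕ → ℝ) (n : ℕ) (r : ℝ) (k : ℕ) : Fin 2 :=
  if a (k + n) < greedyRem a n r k then 1 else 0

lemma greedyRem_succ (k : ℕ) :
    greedyRem a n r (k + 1) =
      greedyRem a n r k - ((greedyDigits a n r k : ℕ) : ℝ) * a (k + n) := by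
  simp only [greedyRem, greedyDigits]
  split_ifs <;> simp

lemma sum_greedyDigits (k : ℕ) :
    ∑ i ∈ range k, ((greedyDigits a n r i : ℕ) : ℝ) * a (i + n) =
      r - greedyRem a n r k := by
  induction k with
  | zero => simp [greedyRem]
  | succ k ih => rw [sum_range_succ, ih, greedyRem_succ]; ring

lemma greedyRem_mem_Ioo (hs : Summable a) (hgap : ∀ m, a m < tailSum a (m + 1))
    (hr : r ∈ Ioo 0 (tailSum a n)) (k : ℕ) :
    greedyRem a n r k ∈ Ioo 0 (tailSum a (k + n)) := by
  induction k with
  | zero => simpa [greedyRem] using hr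
  | succ k ih =>
    have hT := tailSum_eq_add hs (k + n)
    rw [add_right_comm]
    simp only [greedyRem]
    split_ifs with h
    · exact ⟨by linarith, by linarith [ih.2]⟩
    · exact ⟨ih.1, by linarith [hgap (k + n)]⟩

lemma greedyDigits_mem_nonconstExpansions (ha : ∀ n, 0 < a n) (hs : Summable a)
    (hgap : ∀ m, a m < tailSum a (m + 1)) (hr : r ∈ Ioo 0 (tailSum a n)) :
    greedyDigits a n r ∈ nonconstExpansions a n r := by
  have hrem := greedyRem_mem_Ioo hs hgap hr
  have hsum : HasSum (fun i => ((greedyDigits a n r i : ℕ) : ℝ) * a (i + n)) r := by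
    refine (hasSum_iff_tendsto_nat_of_nonneg
      (fun i => mul_nonneg (Nat.cast_nonneg _) (ha _).le) r).2 ?_
    have hT : Tendsto (fun k => tailSum a (k + n)) atTop (𝓝 0) :=
      tendsto_tailSum.comp (tendsto_add_atTop_nat n)
    have h0 : Tendsto (greedyRem a n r) atTop (𝓝 0) :=
      tendsto_of_tendsto_of_tendsto_of_le_of_le tendsto_const_nhds hT
        (fun k => (hrem k).1.le) (fun k => (hrem k).2.le)
    simpa only [sum_greedyDigits, sub_zero] using h0.const_sub r
  refine ⟨hsum, fun hc => ?_⟩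
  obtain ⟨N, hN⟩ := eventuallyConst_atTop.1 hc
  have htail := hasSum_digits_tail hsum N
  rw [sum_greedyDigits, sub_sub_cancel] at htail
  have hconst : greedyRem a n r N = ((greedyDigits a n r N : ℕ) : ℝ) * tailSum a (n + N) := by
    refine htail.unique ?_
    simpa only [hN _ (Nat.le_add_left N _)] using (hasSum_tailSum hs (n + N)).mul_left _
  have hN' := hrem N
  rw [hconst, add_comm N n] at hN'
  have hb := (greedyDigits a n r N).isLt
  interval_cases (greedyDigits a n r N : ℕ) <;> simp at hN'

lemma nontrivial_prepend (w : ℕ → Fin 2) {N : ℕ}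
    (h : (nonconstExpansions a (n + N) r).Nontrivial) :
    (nonconstExpansions a n (r + ∑ i ∈ range N, ((w i : ℕ) : ℝ) * a (i + n))).Nontrivial :=
  (h.image (prepend_injective w N)).mono <| image_subset_iff.2 fun _ hd =>
    prepend_mem_nonconstExpansions w hd

lemma nontrivial_of_add {N : ℕ} (h : (nonconstExpansions a (n + N) r).Nontrivial) :
    (nonconstExpansions a n r).Nontrivial := by
  simpa using nontrivial_prepend 0 h

lemma nontrivial_succ (b : Fin 2)
    (h : (nonconstExpansions a (n + 1) r).Nontrivial) :
    (nonconstExpansions a n (r + ((b : ℕ) : ℝ) * a n)).Nontrivial := by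
  simpa using nontrivial_prepend (fun _ => b) h

lemma nontrivial_tailSum_sub (hs : Summable a)
    (h : (nonconstExpansions a n r).Nontrivial) :
    (nonconstExpansions a n (tailSum a n - r)).Nontrivial :=
  (h.image (Fin.rev_injective.comp_left)).mono <| image_subset_iff.2 fun _ hd =>
    rev_mem_nonconstExpansions hs hd

lemma nontrivial_of_lt_of_lt (ha : ∀ n, 0 < a n) (hs : Summable a)
    (hgap : ∀ m, a m < tailSum a (m + 1)) (h0 : a n < r) (h1 : r < tailSum a (n + 1)) :
    (nonconstExpansions a n r).Nontrivial := by
  have hpos : 0 < r - a n := sub_pos.2 h0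
  have hlt : r - a n < tailSum a (n + 1) := by linarith [ha n]
  refine ⟨prepend 0 1 (greedyDigits a (n + 1) r), ?_,
    prepend 1 1 (greedyDigits a (n + 1) (r - a n)), ?_, fun h => ?_⟩
  · simpa using prepend_mem_nonconstExpansions 0
      (greedyDigits_mem_nonconstExpansions ha hs hgap ⟨(ha n).trans h0, h1⟩)
  · simpa using prepend_mem_nonconstExpansions 1
      (greedyDigits_mem_nonconstExpansions ha hs hgap ⟨hpos, hlt⟩)
  · simpa [prepend] using congrFun h 0

lemma lt_tailSum_succ (ha : ∀ n, 0 < a n) (hpair : ∀ n, a n + a (n + 2) < tailSum a (n + 1))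
    (m : ℕ) : a m < tailSum a (m + 1) := by
  linarith [hpair m, ha (m + 2)]

lemma nontrivial_of_lt_of_le (ha : ∀ n, 0 < a n) (hs : Summable a)
    (hpair : ∀ n, a n + a (n + 2) < tailSum a (n + 1))
    (hskip : ∀ n, a n < tailSum a (n + 2) ∨ a (n + 1) < tailSum a (n + 3)) {q : ℕ}
    (hq : a (q + 1) < r) (hr : r ≤ a q) : (nonconstExpansions a (q + 1) r).Nontrivial := by
  have hgap := lt_tailSum_succ ha hpair
  have hT₁ := tailSum_eq_add hs (q + 1)
  have hT₂ := tailSum_eq_add hs (q + 2)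
  by_cases h : r < tailSum a (q + 2)
  · exact nontrivial_of_lt_of_lt ha hs hgap hq h
  -- `tailSum a (q + 2) ≤ r` forces the digit `1` at `q + 1`, and then position `q + 2` branches.
  have hq' : a (q + 1) < tailSum a (q + 3) := (hskip q).resolve_left (by linarith)
  have := nontrivial_of_lt_of_lt ha hs hgap (n := q + 2) (r := r - a (q + 1))
    (by linarith) (by linarith [hpair q])
  simpa using nontrivial_succ 1 this

lemma nontrivial_of_le (ha : ∀ n, 0 < a n) (hs : Summable a)
    (hpair : ∀ n, a n + a (n + 2) < tailSum a (n + 1))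
    (hskip : ∀ n, a n < tailSum a (n + 2) ∨ a (n + 1) < tailSum a (n + 3))
    (h0 : 0 < r) (hr : r ≤ a n) : (nonconstExpansions a n r).Nontrivial := by
  classical
  have hex : ∃ k, a (k + n + 1) < r := by
    obtain ⟨k, hk⟩ := ((hs.tendsto_atTop_zero.comp (tendsto_add_atTop_nat (n + 1))).eventually
      (gt_mem_nhds h0)).exists
    exact ⟨k, by simpa [add_assoc] using hk⟩
  -- The digits `0` are forced up to the first index `k + n + 1` with `a (k + n + 1) < r`.
  obtain ⟨k, hk, hmin⟩ : ∃ k, a (k + n + 1) < r ∧ r ≤ a (k + n) := by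
    refine ⟨Nat.find hex, Nat.find_spec hex, ?_⟩
    rcases h : Nat.find hex with _ | k
    · simpa using hr
    · have := not_lt.1 (Nat.find_min hex (by omega : k < Nat.find hex))
      simpa [add_right_comm k 1 n] using this
  refine nontrivial_of_add (N := k + 1) ?_
  simpa [add_comm n, add_assoc] using nontrivial_of_lt_of_le ha hs hpair hskip hk hmin

lemma nontrivial_of_mem_Ioo (ha : ∀ n, 0 < a n) (hs : Summable a)
    (hpair : ∀ n, a n + a (n + 2) < tailSum a (n + 1))
    (hskip : ∀ n, a n < tailSum a (n + 2) ∨ a (n + 1) < tailSum a (n + 3))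
    (hr : r ∈ Ioo 0 (tailSum a n)) : (nonconstExpansions a n r).Nontrivial := by
  have hT := tailSum_eq_add hs n
  rcases le_or_gt r (a n) with h | h
  · exact nontrivial_of_le ha hs hpair hskip hr.1 h
  rcases le_or_gt (tailSum a n - r) (a n) with h' | h'
  · simpa using nontrivial_tailSum_sub hs (nontrivial_of_le ha hs hpair hskip (sub_pos.2 hr.2) h')
  · exact nontrivial_of_lt_of_lt ha hs (lt_tailSum_succ ha hpair) h (by linarith)

lemma preperfect_nonconstExpansions (ha : ∀ n, 0 < a n) (hs : Summable a)
    (hnt : ∀ n r, r ∈ Ioo 0 (tailSum a n) → (nonconstExpansions a n r).Nontrivial) (x : ℝ) :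
    Preperfect (nonconstExpansions a 0 x) := by
  refine preperfect_iff_nhds.2 fun c hc U hU => ?_
  obtain ⟨_, ⟨y, N, rfl⟩, hcy, hyU⟩ :=
    (PiNat.isTopologicalBasis_cylinders fun _ : ℕ => Fin 2).mem_nhds_iff.1 hU
  rw [← PiNat.mem_cylinder_iff_eq.1 hcy] at hyU
  have htail := mem_nonconstExpansions_tail hc N
  obtain ⟨d, hd, hne⟩ :=
    (hnt _ _ (mem_Ioo_of_mem_nonconstExpansions ha hs htail)).exists_ne fun i => c (i + N)
  refine ⟨prepend c N d, ⟨hyU ?_, ?_⟩, fun h => hne ?_⟩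
  · exact PiNat.mem_cylinder_iff.2 fun i hi => prepend_of_lt c d hi
  · simpa using prepend_mem_nonconstExpansions c hd
  · funext i
    simpa using congrFun h (i + N)

lemma isClosed_setOf_eq_tsum (ha : ∀ n, 0 < a n) (hs : Summable a) (x : ℝ) :
    IsClosed {c : ℕ → Fin 2 | x = ∑' i, ((c i : ℕ) : ℝ) * a i} := by
  refine isClosed_eq continuous_const (continuous_tsum (fun i => ?_) hs fun i c => ?_)
  · exact (continuous_of_discreteTopology (f := fun b : Fin 2 => ((b : ℕ) : ℝ) * a i)).comp
      (continuous_apply i)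
  · rw [norm_mul, Real.norm_of_nonneg (Nat.cast_nonneg _), Real.norm_of_nonneg (ha i).le]
    exact mul_le_of_le_one_left (ha i).le (digit_le_one _)

open Cardinal in
theorem mk_setOf_eq_tsum (ha : ∀ n, 0 < a n) (hs : Summable a)
    (hpair : ∀ n, a n + a (n + 2) < tailSum a (n + 1))
    (hskip : ∀ n, a n < tailSum a (n + 2) ∨ a (n + 1) < tailSum a (n + 3))
    {x : ℝ} (hx : x ∈ Ioo 0 (tailSum a 0)) :
    #{c : ℕ → Fin 2 // x = ∑' i, ((c i : ℕ) : ℝ) * a i} = 𝔠 := by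
  refine le_antisymm ((mk_subtype_le _).trans (by simp)) ?_
  have hsub : nonconstExpansions a 0 x ⊆ {c | x = ∑' i, ((c i : ℕ) : ℝ) * a i} :=
    fun c hc => by simpa using hc.1.tsum_eq.symm
  calc 𝔠 ≤ #(closure (nonconstExpansions a 0 x)) :=
        (preperfect_nonconstExpansions ha hs
          (fun _ _ => nontrivial_of_mem_Ioo ha hs hpair hskip) x).continuum_le_mk_closure
          ⟨_, greedyDigits_mem_nonconstExpansions ha hs (lt_tailSum_succ ha hpair) hx⟩
    _ ≤ #{c : ℕ → Fin 2 | x = ∑' i, ((c i : ℕ) : ℝ) * a i} :=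
        mk_le_mk_of_subset (closure_minimal hsub (isClosed_setOf_eq_tsum ha hs x))

end DigitExpansion

namespace FibonacciExpansion

open DigitExpansion

noncomputable def fibRecip (i : ℕ) : ℝ := ((Nat.fib (i + 1) : ℕ) : ℝ)⁻¹

lemma cast_fib_succ_pos (n : ℕ) : (0 : ℝ) < Nat.fib (n + 1) := by
  exact_mod_cast Nat.fib_pos.2 n.succ_pos

lemma fibRecip_pos (i : ℕ) : 0 < fibRecip i := inv_pos.2 (cast_fib_succ_pos i)

lemma cast_fib_add_two (n : ℕ) : (Nat.fib (n + 2) : ℝ) = Nat.fib n + Nat.fib (n + 1) := by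
  exact_mod_cast Nat.fib_add_two

lemma cast_fib_add_two_le (n : ℕ) : (Nat.fib (n + 2) : ℝ) ≤ 2 * Nat.fib (n + 1) := by
  rw [cast_fib_add_two]
  have : (Nat.fib n : ℝ) ≤ Nat.fib (n + 1) := by exact_mod_cast Nat.fib_le_fib_succ
  linarith

lemma fibRecip_le_two_mul (n : ℕ) : fibRecip n ≤ 2 * fibRecip (n + 1) := by
  have h := cast_fib_add_two_le n
  have := cast_fib_succ_pos n
  unfold fibRecip
  field_simp
  linarith

lemma summable_fibRecip : Summable fibRecip := by
  refine summable_of_ratio_norm_eventually_le (r := 2 / 3) (by norm_num)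
    (eventually_atTop.2 ⟨1, fun n hn => ?_⟩)
  obtain ⟨m, rfl⟩ := Nat.exists_eq_add_of_le' hn
  rw [Real.norm_of_nonneg (fibRecip_pos _).le, Real.norm_of_nonneg (fibRecip_pos _).le]
  have h := cast_fib_add_two_le m
  have := cast_fib_succ_pos m
  unfold fibRecip
  rw [cast_fib_add_two (m + 1)]
  field_simp
  linarith

lemma fibRecip_lt_add_add (n : ℕ) :
    fibRecip n < fibRecip (n + 1) + fibRecip (n + 2) + fibRecip (n + 3) := by
  have h := cast_fib_add_two_le n
  have hp := cast_fib_succ_pos n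
  have hq := cast_fib_succ_pos (n + 1)
  unfold fibRecip
  rw [cast_fib_add_two (n + 2), cast_fib_add_two (n + 1)]
  field_simp
  nlinarith [mul_nonneg (mul_nonneg (mul_nonneg hq.le (sub_nonneg.2 h)) (add_pos hp hq).le) hp.le,
    pow_pos hp 3]

lemma fib_odd_mul_fib_add_two (j : ℕ) :
    Nat.fib (2 * j + 1) * Nat.fib (2 * j + 3) = Nat.fib (2 * j + 2) ^ 2 + 1 := by
  induction j with
  | zero => simp [Nat.fib_add_two]
  | succ j ih => grind [Nat.fib_add_two]

lemma fibRecip_lt_two_mul_add (j : ℕ) :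
    fibRecip (2 * j) < 2 * fibRecip (2 * j + 2) + fibRecip (2 * j + 3) := by
  have hc : (Nat.fib (2 * j + 1) : ℝ) * Nat.fib (2 * j + 3) = Nat.fib (2 * j + 2) ^ 2 + 1 := by
    exact_mod_cast fib_odd_mul_fib_add_two j
  have hp := cast_fib_succ_pos (2 * j)
  have hq := cast_fib_succ_pos (2 * j + 1)
  unfold fibRecip
  rw [cast_fib_add_two (2 * j + 2), cast_fib_add_two (2 * j + 1)]
  rw [cast_fib_add_two (2 * j + 1)] at hc
  field_simp
  nlinarith

lemma fibRecip_lt_tailSum_add_two {n : ℕ} (hn : Even n) :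
    fibRecip n < tailSum fibRecip (n + 2) := by
  obtain ⟨j, rfl⟩ := hn
  -- `g` is increasing by Cassini's identity and tends to `0`, hence it is negative.
  set g : ℕ → ℝ := fun k => fibRecip (2 * k) - tailSum fibRecip (2 * k + 2)
  have hg : StrictMono g := strictMono_nat_of_lt_succ fun k => by
    have h₁ := tailSum_eq_add summable_fibRecip (2 * k + 2)
    have h₂ := tailSum_eq_add summable_fibRecip (2 * k + 3)
    have := fibRecip_lt_two_mul_add k
    simp only [g, mul_add, mul_one]
    linarith
  have hlim : Tendsto g atTop (𝓝 0) := by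
    have h2 : Tendsto (fun k : ℕ => 2 * k) atTop atTop := tendsto_id.const_mul_atTop' two_pos
    simpa using (summable_fibRecip.tendsto_atTop_zero.comp h2).sub
      (tendsto_tailSum.comp (tendsto_add_atTop_nat 2 |>.comp h2))
  rw [← two_mul]
  linarith [hg (Nat.lt_succ_self j), hg.monotone.ge_of_tendsto hlim (j + 1)]

lemma fibRecip_add_lt_tailSum (n : ℕ) :
    fibRecip n + fibRecip (n + 2) < tailSum fibRecip (n + 1) := by
  have h₁ := tailSum_eq_add summable_fibRecip (n + 1)
  have h₂ := tailSum_eq_add summable_fibRecip (n + 2)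
  have h₃ := tailSum_eq_add summable_fibRecip (n + 3)
  rcases Nat.even_or_odd n with h | h
  · linarith [fibRecip_lt_tailSum_add_two (h.add even_two), fibRecip_lt_add_add n]
  · linarith [fibRecip_lt_tailSum_add_two h.add_one, fibRecip_le_two_mul n]

lemma fibRecip_lt_tailSum_add_two_or (n : ℕ) :
    fibRecip n < tailSum fibRecip (n + 2) ∨ fibRecip (n + 1) < tailSum fibRecip (n + 3) := by
  rcases Nat.even_or_odd n with h | h
  · exact .inl (fibRecip_lt_tailSum_add_two h)
  · exact .inr (fibRecip_lt_tailSum_add_two h.add_one)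

lemma fib_eq_of_rec (F : ℕ → ℕ) (h1 : F 1 = 1) (h2 : F 2 = 1)
    (hrec : ∀ i, 1 ≤ i → F (i + 2) = F (i + 1) + F i) (n : ℕ) :
    F (n + 1) = Nat.fib (n + 1) := by
  induction n using Nat.twoStepInduction with
  | zero => simpa using h1
  | one => simpa using h2
  | more n ih₁ ih₂ =>
    rw [hrec (n + 1) le_add_self, ih₂, ih₁, add_comm]
    exact (Nat.fib_add_two (n := n + 1)).symm

end FibonacciExpansion

open DigitExpansion FibonacciExpansion in
/-- Every `x ∈ (0, S)`, where `S = Σ_{i=1}^∞ 1/F_i`, has a continuum of Fibonacci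
expansions `x = Σ_{i=1}^∞ c_i / F_i` with digits `c_i ∈ {0,1}`. -/
theorem stmt_4 (F : ℕ → ℕ) (h1 : F 1 = 1) (h2 : F 2 = 1)
    (hrec : ∀ i, 1 ≤ i → F (i + 2) = F (i + 1) + F i)
    (S : ℝ) (hS : S = ∑' i : ℕ, (1 : ℝ) / (F (i + 1) : ℝ))
    (x : ℝ) (hx1 : 0 < x) (hx2 : x < S) :
    Cardinal.mk {c : ℕ → Fin 2 // x = ∑' i : ℕ, ((c i : ℕ) : ℝ) / (F (i + 1) : ℝ)} =
      Cardinal.continuum := by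
  have hF (i : ℕ) : (F (i + 1) : ℝ) = Nat.fib (i + 1) := by
    exact_mod_cast fib_eq_of_rec F h1 h2 hrec i
  have hS' : S = tailSum fibRecip 0 := by simp [hS, hF, tailSum, fibRecip]
  simp_rw [hF, div_eq_mul_inv]
  exact mk_setOf_eq_tsum fibRecip_pos summable_fibRecip fibRecip_add_lt_tailSum
    fibRecip_lt_tailSum_add_two_or ⟨hx1, hS' ▸ hx2⟩
end

section
/- Let (F_i) be the Fibonacci sequence with F_1 = F_2 = 1 and F_{i+2} = F_{i+1} + F_i. Then for every n ≥ 1, the strict inequality 1/F_n < Σ_{i=n+1}^∞ 1/F_i holds. Consequently, (1/F_i)_{i≥1} is a Kakeya sequence. -/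
/-!
Such an `F` is `Nat.fib` on positive indices. Since `fib (n + 1) ≤ 2 * fib n`, the three terms
following `1 / fib n` already exceed it, as `1/2 + 1/3 + 1/5 > 1`. Summability follows from the
ratio test, `fib n / fib (n + 1)` tending to `φ⁻¹ < 1`; in particular `1 / fib n → 0`.
-/

open Nat Real Filter
open scoped goldenRatio

theorem eq_fib_of_fib_rec {F : ℕ → ℕ} (h1 : F 1 = 1) (h2 : F 2 = 1)
    (hrec : ∀ i, 1 ≤ i → F (i + 2) = F (i + 1) + F i) : ∀ i, 1 ≤ i → F i = fib i := by
  have hpair : ∀ i, F (i + 1) = fib (i + 1) ∧ F (i + 2) = fib (i + 2) := by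
    intro i
    induction i with
    | zero => exact ⟨h1, h2⟩
    | succ k ih =>
      refine ⟨ih.2, ?_⟩
      rw [hrec (k + 1) (by omega), ih.1, ih.2, fib_add_two (n := k + 1), add_comm]
  intro i hi
  obtain ⟨k, rfl⟩ := Nat.exists_eq_add_of_le' hi
  exact (hpair k).1

theorem fib_succ_le_two_mul_fib {n : ℕ} (hn : n ≠ 0) : fib (n + 1) ≤ 2 * fib n := by
  rw [fib_add_one hn, two_mul]
  exact Nat.add_le_add_right (fib_mono (Nat.sub_le n 1)) _

theorem one_div_lt_of_le_two_mul {a b : ℝ} (hb : 0 < b) (hba : b ≤ 2 * a) :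
    1 / a < 1 / b + 1 / (a + b) + 1 / (a + 2 * b) := by
  have ha : 0 < a := by linarith
  calc 1 / a < 1 / (2 * a) + 1 / (3 * a) + 1 / (5 * a) := by
        field_simp
        norm_num
    _ ≤ 1 / b + 1 / (a + b) + 1 / (a + 2 * b) := by
        gcongr <;> linarith

theorem summable_one_div_fib : Summable fun n => 1 / (fib n : ℝ) := by
  refine summable_of_ratio_test_tendsto_lt_one (neg_lt.mp neg_one_lt_goldenConj)
    (eventually_atTop.2 ⟨1, fun n hn => one_div_ne_zero (Nat.cast_ne_zero.2 (fib_pos.2 hn).ne')⟩) ?_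
  refine tendsto_fib_div_fib_succ_atTop.congr fun n => ?_
  rw [norm_div, norm_div, norm_one, norm_natCast, norm_natCast,
    div_div_div_cancel_left' _ _ one_ne_zero]

theorem one_div_fib_lt_tsum {n : ℕ} (hn : 1 ≤ n) :
    1 / (fib n : ℝ) < ∑' i, 1 / (fib (n + 1 + i) : ℝ) := by
  have hfib : (fib (n + 1) : ℝ) ≤ 2 * fib n := by exact_mod_cast fib_succ_le_two_mul_fib (by omega)
  have hpos : (0 : ℝ) < fib (n + 1) := by exact_mod_cast fib_pos.2 (by omega)
  have h2 : (fib (n + 2) : ℝ) = fib n + fib (n + 1) := by exact_mod_cast fib_add_two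
  have h3 : (fib (n + 3) : ℝ) = fib n + 2 * fib (n + 1) := by
    rw [show n + 3 = n + 1 + 2 from rfl, fib_add_two, Nat.cast_add, h2]
    ring
  calc 1 / (fib n : ℝ) < 1 / fib (n + 1) + 1 / fib (n + 2) + 1 / fib (n + 3) := by
        rw [h2, h3]
        exact one_div_lt_of_le_two_mul hpos hfib
    _ = ∑ i ∈ Finset.range 3, 1 / (fib (n + 1 + i) : ℝ) := by
        simp [Finset.sum_range_succ, add_assoc]
    _ ≤ ∑' i, 1 / (fib (n + 1 + i) : ℝ) :=
        (((summable_nat_add_iff (n + 1)).2 summable_one_div_fib).congr fun i => by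
          rw [add_comm i]).sum_le_tsum _ fun i _ => by positivity

/-- For the Fibonacci sequence, `1/F_n < Σ_{i=n+1}^∞ 1/F_i` for every `n ≥ 1`;
consequently `(1/F_i)_{i ≥ 1}` is a Kakeya sequence (positive terms, tending to `0`,
with `p_n ≤ Σ_{i=n+1}^∞ p_i` for every `n ≥ 1`). -/
theorem stmt_7 (F : ℕ → ℕ) (h1 : F 1 = 1) (h2 : F 2 = 1)
    (hrec : ∀ i, 1 ≤ i → F (i + 2) = F (i + 1) + F i) :
    (∀ n, 1 ≤ n → (1 : ℝ) / (F n : ℝ) < ∑' i : ℕ, (1 : ℝ) / (F (n + 1 + i) : ℝ)) ∧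
      (∀ i, 1 ≤ i → 0 < (1 : ℝ) / (F i : ℝ)) ∧
      Filter.Tendsto (fun i => (1 : ℝ) / (F i : ℝ)) Filter.atTop (nhds 0) ∧
      (∀ n, 1 ≤ n → (1 : ℝ) / (F n : ℝ) ≤ ∑' i : ℕ, (1 : ℝ) / (F (n + 1 + i) : ℝ)) := by
  have hF := eq_fib_of_fib_rec h1 h2 hrec
  have hlt : ∀ n, 1 ≤ n → (1 : ℝ) / (F n : ℝ) < ∑' i : ℕ, (1 : ℝ) / (F (n + 1 + i) : ℝ) := by
    intro n hn
    rw [hF n hn, tsum_congr fun i => by rw [hF (n + 1 + i) (by omega)]]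
    exact one_div_fib_lt_tsum hn
  refine ⟨hlt, fun i hi => ?_, ?_, fun n hn => (hlt n hn).le⟩
  · rw [hF i hi]
    exact one_div_pos.2 (by exact_mod_cast fib_pos.2 hi)
  · refine summable_one_div_fib.tendsto_atTop_zero.congr' (eventually_atTop.2 ⟨1, fun i hi => ?_⟩)
    simp only [hF i hi]
end

section
/- Let q ∈ (1,2) and let (ε_i)_{i≥1} be a bounded sequence of real numbers with ε_i > −1 for all i, inf_j ε_j > −1, and satisfying (1 + inf_j ε_j)/(1 + sup_j ε_j) ≥ q − 1. Then the sequence p_i = 1/(q^i (1+ε_i)) is a Kakeya sequence: p_i → 0 and p_n ≤ Σ_{i=n+1}^∞ p_i for every n ≥ 1. -/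
/-!
With `m = inf ε` and `M = sup ε`, every `p_i` lies between `1 / ((1 + M) q^i)` and
`1 / ((1 + m) q^i)`. The upper bound gives `p_i → 0`. The lower bound makes the tail
`Σ_{i>n} p_i` at least the geometric tail `1 / ((1 + M) q^n (q - 1))`, which dominates
`p_n = 1 / ((1 + ε_n) q^n)` because `(q - 1)(1 + M) ≤ 1 + m ≤ 1 + ε_n`.
-/

open Filter Topology

section
variable {q : ℝ} {c : ℕ → ℝ}

theorem tendsto_one_div_pow_mul_atTop_zero {m : ℝ} (hq : 1 < q) (hm : 0 < m)
    (hc : ∀ᶠ i in atTop, m ≤ c i) :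
    Tendsto (fun i => 1 / (q ^ i * c i)) atTop (𝓝 0) := by
  have hgrow : Tendsto (fun i => q ^ i * c i) atTop atTop := by
    refine tendsto_atTop_mono' atTop ?_ ((tendsto_pow_atTop_atTop_of_one_lt hq).atTop_mul_const hm)
    filter_upwards [hc] with i hi
    gcongr
  simpa only [one_div, Function.comp_def] using tendsto_inv_atTop_zero.comp hgrow

theorem hasSum_one_div_pow_add_mul (hq : 1 < q) (n : ℕ) (a : ℝ) :
    HasSum (fun i => 1 / (q ^ (n + 1 + i) * a)) (1 / (q ^ n * (q - 1) * a)) := by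
  have hq0 : 0 < q := one_pos.trans hq
  have hq1 : q - 1 ≠ 0 := sub_ne_zero.2 hq.ne'
  have hterm : (fun i => 1 / (q ^ (n + 1 + i) * a)) = fun i => 1 / (q ^ (n + 1) * a) * q⁻¹ ^ i := by
    funext i
    rw [pow_add, inv_pow]
    field_simp
  have hsum : 1 / (q ^ n * (q - 1) * a) = 1 / (q ^ (n + 1) * a) * (1 - q⁻¹)⁻¹ := by
    field_simp
    ring
  rw [hterm, hsum]
  exact (hasSum_geometric_of_lt_one (inv_nonneg.2 hq0.le) (inv_lt_one_of_one_lt₀ hq)).mul_left _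

theorem one_div_pow_mul_le_tsum {m M : ℝ} {n : ℕ} (hq : 1 < q) (hm : 0 < m)
    (hc : ∀ i, n < i → m ≤ c i ∧ c i ≤ M) (hcn : (q - 1) * M ≤ c n) :
    1 / (q ^ n * c n) ≤ ∑' i, 1 / (q ^ (n + 1 + i) * c (n + 1 + i)) := by
  have hq0 : 0 < q := one_pos.trans hq
  have hM : 0 < M := hm.trans_le ((hc (n + 1) n.lt_succ_self).1.trans (hc (n + 1) n.lt_succ_self).2)
  have htail (i : ℕ) : m ≤ c (n + 1 + i) ∧ c (n + 1 + i) ≤ M := hc _ (by omega)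
  have hsummable : Summable fun i => 1 / (q ^ (n + 1 + i) * c (n + 1 + i)) := by
    refine (hasSum_one_div_pow_add_mul hq n m).summable.of_nonneg_of_le
      (fun i => ?_) (fun i => ?_)
    · have := hm.trans_le (htail i).1
      positivity
    · gcongr
      exact (htail i).1
  have hcompare (i : ℕ) : 1 / (q ^ (n + 1 + i) * M) ≤ 1 / (q ^ (n + 1 + i) * c (n + 1 + i)) := by
    have := hm.trans_le (htail i).1
    gcongr
    exact (htail i).2
  calc 1 / (q ^ n * c n) ≤ 1 / (q ^ n * (q - 1) * M) := by
        have : 0 < q - 1 := by linarith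
        rw [mul_assoc]
        gcongr
    _ ≤ ∑' i, 1 / (q ^ (n + 1 + i) * c (n + 1 + i)) :=
        hasSum_le hcompare (hasSum_one_div_pow_add_mul hq n M) hsummable.hasSum

end

theorem stmt_8_general (q : ℝ) (hq1 : 1 < q)
    (ε : ℕ → ℝ)
    (hbdd_above : BddAbove (Set.range fun j : ℕ => ε (j + 1)))
    (hbdd_below : BddBelow (Set.range fun j : ℕ => ε (j + 1)))
    (hinf : -1 < ⨅ j : ℕ, ε (j + 1))
    (hmain : q - 1 ≤ (1 + ⨅ j : ℕ, ε (j + 1)) / (1 + ⨆ j : ℕ, ε (j + 1))) :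
    Filter.Tendsto (fun i : ℕ => 1 / (q ^ i * (1 + ε i))) Filter.atTop (nhds 0) ∧
      ∀ n, 1 ≤ n →
        1 / (q ^ n * (1 + ε n)) ≤
          ∑' i : ℕ, 1 / (q ^ (n + 1 + i) * (1 + ε (n + 1 + i))) := by
  set m := ⨅ j : ℕ, ε (j + 1)
  set M := ⨆ j : ℕ, ε (j + 1)
  have hbounds (i : ℕ) (hi : 1 ≤ i) : 1 + m ≤ 1 + ε i ∧ 1 + ε i ≤ 1 + M := by
    obtain ⟨j, rfl⟩ := Nat.exists_eq_add_of_le' hi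
    exact ⟨by gcongr; exact ciInf_le hbdd_below j, by gcongr; exact le_ciSup hbdd_above j⟩
  have hm : 0 < 1 + m := by linarith
  have hM : 0 < 1 + M := hm.trans_le ((hbounds 1 le_rfl).1.trans (hbounds 1 le_rfl).2)
  refine ⟨tendsto_one_div_pow_mul_atTop_zero hq1 hm ?_, fun n hn => ?_⟩
  · filter_upwards [eventually_ge_atTop 1] with i hi using (hbounds i hi).1
  · refine one_div_pow_mul_le_tsum hq1 hm (fun i hi => hbounds i (by omega)) ?_
    calc (q - 1) * (1 + M) ≤ 1 + m := (le_div_iff₀ hM).1 hmain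
      _ ≤ 1 + ε n := (hbounds n hn).1

/-- If `1 < q < 2` and `(ε_i)_{i ≥ 1}` is a bounded sequence with `ε_i > -1` for all
`i ≥ 1`, `inf_j ε_j > -1`, and `(1 + inf_j ε_j)/(1 + sup_j ε_j) ≥ q - 1`, then
`p_i = 1/(q^i (1 + ε_i))` is a Kakeya sequence: `p_i → 0` and
`p_n ≤ Σ_{i=n+1}^∞ p_i` for every `n ≥ 1`. -/
theorem stmt_8 (q : ℝ) (hq1 : 1 < q) (hq2 : q < 2)
    (ε : ℕ → ℝ)
    (hbdd_above : BddAbove (Set.range fun j : ℕ => ε (j + 1)))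
    (hbdd_below : BddBelow (Set.range fun j : ℕ => ε (j + 1)))
    (hgt : ∀ i, 1 ≤ i → -1 < ε i)
    (hinf : -1 < ⨅ j : ℕ, ε (j + 1))
    (hmain : q - 1 ≤ (1 + ⨅ j : ℕ, ε (j + 1)) / (1 + ⨆ j : ℕ, ε (j + 1))) :
    Filter.Tendsto (fun i : ℕ => 1 / (q ^ i * (1 + ε i))) Filter.atTop (nhds 0) ∧
      ∀ n, 1 ≤ n →
        1 / (q ^ n * (1 + ε n)) ≤
          ∑' i : ℕ, 1 / (q ^ (n + 1 + i) * (1 + ε (n + 1 + i))) :=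
  stmt_8_general q hq1 ε hbdd_above hbdd_below hinf hmain
end

section
/- Let (p_i)_{i≥1} be a sequence of positive real numbers satisfying: (i) p_i → 0; (ii) p_n < Σ_{i=n+1}^∞ p_i for all n ≥ 1; (iii) p_{n−1} < Σ_{i=n+1}^∞ p_i for infinitely many n; (iv) p_n ≤ 2 p_{n+1} for all sufficiently large n; and assume Σ p_i converges. Call an index k special if p_{k−1} < Σ_{i=k+1}^∞ p_i. Then there exists K ≥ 1 such that for every special index k > K, the sequence (q_i) obtained from (p_i) by removing the term p_k (i.e., q_i = p_i for i < k and q_i = p_{i+1} for i ≥ k) again satisfies conditions (i)–(iv). -/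
/-!
Removing `p k` lowers every tail `Σ_{i>n} p_i` with `n < k` by `p k` and only shifts the
sequence beyond `k`, so (i), (iii), (iv) survive and (ii) survives beyond `k`. Below `k`, (ii)
for `q` reads `p n < Σ_{i>n} p_i - p k`. For the finitely many `n` below the doubling
threshold this holds as soon as `p k` is smaller than the finitely many margins of (ii). Above
the threshold it propagates downwards from `n = k - 1`, where it is exactly the speciality of
`k`: if `p (n+1) < Σ_{i>n+1} p_i - p k` then
`Σ_{i>n} p_i - p k = p (n+1) + (Σ_{i>n+1} p_i - p k) > 2 p (n+1) ≥ p n`.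
-/

open Filter Topology

namespace SeqRemoval

noncomputable def tail (p : ℕ → ℝ) (n : ℕ) : ℝ := ∑' i, p (n + 1 + i)

def removeAt {α : Type*} (p : ℕ → α) (k i : ℕ) : α := if i < k then p i else p (i + 1)

section removeAt

variable {α : Type*} (p : ℕ → α) {k n : ℕ}

theorem removeAt_of_lt (h : n < k) : removeAt p k n = p n := if_pos h

theorem removeAt_of_le (h : k ≤ n) : removeAt p k n = p (n + 1) := if_neg (by omega)

theorem tendsto_removeAt [TopologicalSpace α] {a : α} (hp : Tendsto p atTop (𝓝 a)) (k : ℕ) :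
    Tendsto (removeAt p k) atTop (𝓝 a) := by
  refine (hp.comp (tendsto_add_atTop_nat 1)).congr' ?_
  filter_upwards [eventually_ge_atTop k] with i hi
  exact (removeAt_of_le p hi).symm

end removeAt

variable {p : ℕ → ℝ} {k n : ℕ}

theorem summable_removeAt (hp : Summable p) (k : ℕ) : Summable (removeAt p k) := by
  refine (summable_nat_add_iff k).1 (((summable_nat_add_iff (k + 1)).2 hp).congr fun i => ?_)
  rw [removeAt_of_le p (Nat.le_add_left k i), add_assoc]

theorem tail_eq_add_tail_succ (hp : Summable p) (n : ℕ) :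
    tail p n = p (n + 1) + tail p (n + 1) := by
  have hs : Summable fun i => p (n + 1 + i) :=
    ((summable_nat_add_iff (n + 1)).2 hp).congr fun i => by rw [add_comm]
  rw [tail, hs.tsum_eq_zero_add, tail, add_zero]
  exact congrArg _ (tsum_congr fun i => congrArg p (by ring))

theorem tail_removeAt_of_le (h : k ≤ n) : tail (removeAt p k) n = tail p (n + 1) :=
  tsum_congr fun i => by rw [removeAt_of_le p (by omega)]; ring_nf

theorem tail_removeAt_of_lt (hp : Summable p) (h : n < k) :
    tail (removeAt p k) n = tail p n - p k := by
  obtain ⟨j, rfl⟩ : ∃ j, k = j + 1 := ⟨k - 1, by omega⟩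
  have hq := summable_removeAt hp (j + 1)
  refine Nat.decreasingInduction' (P := fun m => tail (removeAt p (j + 1)) m = tail p m - p (j + 1))
    (fun m hm _ ih => ?_) (Nat.le_of_lt_succ h) ?_
  · rw [tail_eq_add_tail_succ hq, ih, removeAt_of_lt p (by omega), tail_eq_add_tail_succ hp m]
    ring
  · rw [tail_eq_add_tail_succ hq, tail_removeAt_of_le le_rfl, removeAt_of_le p le_rfl,
      ← tail_eq_add_tail_succ hp, tail_eq_add_tail_succ hp j]
    ring

theorem lt_tail_sub_of_doubling (hp : Summable p) {m : ℕ}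
    (hdbl : ∀ n, m ≤ n → p n ≤ 2 * p (n + 1)) (hk : p (k - 1) < tail p k)
    (hmn : m ≤ n) (hnk : n < k) : p n < tail p n - p k := by
  obtain ⟨j, rfl⟩ : ∃ j, k = j + 1 := ⟨k - 1, by omega⟩
  refine Nat.decreasingInduction' (P := fun i => p i < tail p i - p (j + 1))
    (fun i hij hni ih => ?_) (Nat.le_of_lt_succ hnk) ?_
  · have := hdbl i (hmn.trans hni)
    rw [tail_eq_add_tail_succ hp i]
    linarith
  · rw [tail_eq_add_tail_succ hp j]
    simpa using hk

theorem eventually_forall_Icc_lt_tail_sub (hlim : Tendsto p atTop (𝓝 0))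
    (h2 : ∀ n, 1 ≤ n → p n < tail p n) (m : ℕ) :
    ∀ᶠ k in atTop, ∀ n ∈ Finset.Icc 1 m, p n < tail p n - p k := by
  refine (Finset.Icc 1 m).eventually_all.2 fun n hn => ?_
  have hgap : 0 < tail p n - p n := sub_pos.2 (h2 n (Finset.mem_Icc.1 hn).1)
  filter_upwards [hlim.eventually (gt_mem_nhds hgap)] with k hk
  linarith

theorem lt_tail_sub_of_special (hp : Summable p) {m : ℕ}
    (hdbl : ∀ n, m ≤ n → p n ≤ 2 * p (n + 1))
    (hsmall : ∀ n ∈ Finset.Icc 1 m, p n < tail p n - p k)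
    (hk : p (k - 1) < tail p k) (hn : 1 ≤ n) (hnk : n < k) : p n < tail p n - p k := by
  rcases le_total m n with hmn | hnm
  · exact lt_tail_sub_of_doubling hp hdbl hk hmn hnk
  · exact hsmall n (Finset.mem_Icc.2 ⟨hn, hnm⟩)

theorem removeAt_lt_tail (hp : Summable p) (h2 : ∀ n, 1 ≤ n → p n < tail p n)
    (hlow : ∀ n, 1 ≤ n → n < k → p n < tail p n - p k) (hn : 1 ≤ n) :
    removeAt p k n < tail (removeAt p k) n := by
  rcases lt_or_ge n k with hnk | hkn
  · rw [removeAt_of_lt p hnk, tail_removeAt_of_lt hp hnk]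
    exact hlow n hn hnk
  · rw [removeAt_of_le p hkn, tail_removeAt_of_le hkn]
    exact h2 (n + 1) (by omega)

theorem removeAt_frequently_special
    (h3 : ∀ N, ∃ n, N ≤ n ∧ 2 ≤ n ∧ p (n - 1) < tail p n) (k N : ℕ) :
    ∃ n, N ≤ n ∧ 2 ≤ n ∧ removeAt p k (n - 1) < tail (removeAt p k) n := by
  obtain ⟨n, hn, -, hspec⟩ := h3 (N + k + 3)
  refine ⟨n - 1, by omega, by omega, ?_⟩
  rw [removeAt_of_le p (by omega), tail_removeAt_of_le (by omega)]
  simpa [show n - 1 + 1 = n by omega, show n - 1 - 1 + 1 = n - 1 by omega] using hspec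

theorem removeAt_doubling {N : ℕ} (hdbl : ∀ n, N ≤ n → p n ≤ 2 * p (n + 1)) (k : ℕ) :
    ∀ n, max N k ≤ n → removeAt p k n ≤ 2 * removeAt p k (n + 1) := by
  intro n hn
  rw [removeAt_of_le p (le_of_max_le_right hn), removeAt_of_le p (by omega)]
  exact hdbl (n + 1) (by omega)

end SeqRemoval

open SeqRemoval

theorem stmt_10_general (p : ℕ → ℝ)
    (hlim : Filter.Tendsto p Filter.atTop (nhds 0))
    (hsum : Summable (fun i => p (i + 1)))
    (h2 : ∀ n, 1 ≤ n → p n < ∑' i : ℕ, p (n + 1 + i))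
    (h3 : ∀ N, ∃ n, N ≤ n ∧ 2 ≤ n ∧ p (n - 1) < ∑' i : ℕ, p (n + 1 + i))
    (h4 : ∃ N, ∀ n, N ≤ n → p n ≤ 2 * p (n + 1)) :
    ∃ K, 1 ≤ K ∧ ∀ k, K < k → p (k - 1) < (∑' i : ℕ, p (k + 1 + i)) →
      ∀ q : ℕ → ℝ, (∀ i, q i = if i < k then p i else p (i + 1)) →
        Filter.Tendsto q Filter.atTop (nhds 0) ∧
          (∀ n, 1 ≤ n → q n < ∑' i : ℕ, q (n + 1 + i)) ∧
          (∀ N, ∃ n, N ≤ n ∧ 2 ≤ n ∧ q (n - 1) < ∑' i : ℕ, q (n + 1 + i)) ∧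
          (∃ N, ∀ n, N ≤ n → q n ≤ 2 * q (n + 1)) := by
  obtain ⟨N, hdbl⟩ := h4
  have hp : Summable p := (summable_nat_add_iff 1).1 hsum
  obtain ⟨K, hK⟩ := eventually_atTop.1 (eventually_forall_Icc_lt_tail_sub hlim h2 N)
  refine ⟨K + 1, by omega, fun k hk hspec q hq => ?_⟩
  obtain rfl : q = removeAt p k := funext hq
  exact ⟨tendsto_removeAt p hlim k,
    fun n hn => removeAt_lt_tail hp h2
      (fun m hm hmk => lt_tail_sub_of_special hp hdbl (hK k (by omega)) hspec hm hmk) hn,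
    removeAt_frequently_special h3 k, ⟨_, removeAt_doubling hdbl k⟩⟩

/-- Removal lemma: if `(p_i)_{i ≥ 1}` satisfies (i) `p_i → 0`, (ii) `p_n < Σ_{i=n+1}^∞ p_i`
for all `n ≥ 1`, (iii) `p_{n-1} < Σ_{i=n+1}^∞ p_i` for infinitely many `n`, and
(iv) `p_n ≤ 2 p_{n+1}` for all sufficiently large `n`, with convergent sum, then there is
`K ≥ 1` such that for every special index `k > K` (i.e. `p_{k-1} < Σ_{i=k+1}^∞ p_i`), the
sequence obtained by removing `p_k` still satisfies (i)–(iv). -/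
theorem stmt_10 (p : ℕ → ℝ)
    (hpos : ∀ i, 1 ≤ i → 0 < p i)
    (hlim : Filter.Tendsto p Filter.atTop (nhds 0))
    (hsum : Summable (fun i => p (i + 1)))
    (h2 : ∀ n, 1 ≤ n → p n < ∑' i : ℕ, p (n + 1 + i))
    (h3 : ∀ N, ∃ n, N ≤ n ∧ 2 ≤ n ∧ p (n - 1) < ∑' i : ℕ, p (n + 1 + i))
    (h4 : ∃ N, ∀ n, N ≤ n → p n ≤ 2 * p (n + 1)) :
    ∃ K, 1 ≤ K ∧ ∀ k, K < k → p (k - 1) < (∑' i : ℕ, p (k + 1 + i)) →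
      ∀ q : ℕ → ℝ, (∀ i, q i = if i < k then p i else p (i + 1)) →
        Filter.Tendsto q Filter.atTop (nhds 0) ∧
          (∀ n, 1 ≤ n → q n < ∑' i : ℕ, q (n + 1 + i)) ∧
          (∀ N, ∃ n, N ≤ n ∧ 2 ≤ n ∧ q (n - 1) < ∑' i : ℕ, q (n + 1 + i)) ∧
          (∃ N, ∀ n, N ≤ n → q n ≤ 2 * q (n + 1)) :=
  stmt_10_general p hlim hsum h2 h3 h4
end

section
/- Let φ = (1+√5)/2 and let ρ > 1/φ. Let (p_i)_{i≥1} be a sequence of positive real numbers with p_{i+1} ≥ ρ p_i for all i and p_i → 0, and assume Σ p_i converges with sum S. Then for every x ∈ (0, S), the set of sequences (c_i) ∈ {0,1}^ℕ satisfying x = Σ_{i=1}^∞ c_i p_i has the cardinality of the continuum. -/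
/-!
Write `q m = p (m + 1)` and `T m = ∑_{k ≥ m} q k`. Since `ρ > 1/φ` means `ρ + ρ² > 1`, the ratio
bound gives `q m < ρ² / (1 - ρ) * q m ≤ T (m + 2)`. Run a digit-by-digit process that keeps the
remainder `r` in `(0, T m)`: at step `m`, if `q m < r < T (m + 1)` both digits preserve the
invariant and the next unread bit of an arbitrary `b ∈ {0,1}^ℕ` decides; otherwise the digit is
forced. As `T m → 0`, the digits expand `x`. A choice occurs infinitely often: a forced `0` with
`r ≤ q m < T (m + 2)` forces `0` again at the next step, so without choices the tail digits would
be all `0` or all `1`, giving `r = 0` or `r = T m`. Hence every bit of `b` is read, and `b` is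
recovered from the digits it produces.
-/

open Filter Topology Finset

theorem exists_eq_and_succ_eq_of_lt {f : ℕ → ℕ} (h0 : f 0 = 0) (hstep : ∀ m, f (m + 1) ≤ f m + 1)
    {j m : ℕ} (hj : j < f m) : ∃ n, f n = j ∧ f (n + 1) = j + 1 := by
  induction m with
  | zero => omega
  | succ m ih =>
    by_cases hjm : j < f m
    · exact ih hjm
    · have := hstep m
      exact ⟨m, by omega, by omega⟩

open Real in
theorem one_lt_add_sq_of_inv_goldenRatio_lt {ρ : ℝ} (hρ : goldenRatio⁻¹ < ρ) : 1 < ρ + ρ ^ 2 := by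
  rw [inv_goldenRatio] at hρ
  nlinarith [goldenConj_sq, goldenConj_neg]

namespace Expansion

variable (q : ℕ → ℝ)

noncomputable def tailSum (m : ℕ) : ℝ := ∑' k, q (k + m)

def Branches (m : ℕ) (r : ℝ) : Prop := q m < r ∧ r < tailSum q (m + 1)

open Classical in
noncomputable def digit (m : ℕ) (r : ℝ) (β : Fin 2) : Fin 2 :=
  if Branches q m r then β else if r ≤ q m then 0 else 1

open Classical in
/-- The remainder after step `m`, and the number of bits of `b` read so far. -/
noncomputable def state (x : ℝ) (b : ℕ → Fin 2) : ℕ → ℝ × ℕ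
  | 0 => (x, 0)
  | m + 1 =>
    let s := state x b m
    (s.1 - ((digit q m s.1 (b s.2) : ℕ) : ℝ) * q m, if Branches q m s.1 then s.2 + 1 else s.2)

noncomputable def digits (x : ℝ) (b : ℕ → Fin 2) (m : ℕ) : Fin 2 :=
  digit q m (state q x b m).1 (b (state q x b m).2)

variable {q}

theorem tailSum_eq_add (hsum : Summable q) (m : ℕ) :
    tailSum q m = q m + tailSum q (m + 1) := by
  rw [tailSum, ((summable_nat_add_iff m).2 hsum).tsum_eq_zero_add, zero_add, tailSum]
  simp only [add_right_comm _ 1 m, add_assoc]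

theorem lt_tailSum_succ (hq : ∀ n, 0 ≤ q n) (hsum : Summable q)
    (hgap : ∀ n, q n < tailSum q (n + 2)) (m : ℕ) : q m < tailSum q (m + 1) := by
  linarith [tailSum_eq_add hsum (m + 1), hq (m + 1), hgap m]

theorem sub_digit_mul_mem_Ioo {m : ℕ}
    (hT : tailSum q m = q m + tailSum q (m + 1)) (hqT : q m < tailSum q (m + 1)) {r : ℝ}
    (hr : r ∈ Set.Ioo 0 (tailSum q m)) (β : Fin 2) :
    r - ((digit q m r β : ℕ) : ℝ) * q m ∈ Set.Ioo 0 (tailSum q (m + 1)) := by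
  have hkeep (hr' : r < tailSum q (m + 1)) :
      r - (((0 : Fin 2) : ℕ) : ℝ) * q m ∈ Set.Ioo 0 (tailSum q (m + 1)) := by
    simpa using ⟨hr.1, hr'⟩
  have hsub (hr' : q m < r) :
      r - (((1 : Fin 2) : ℕ) : ℝ) * q m ∈ Set.Ioo 0 (tailSum q (m + 1)) := by
    simp only [Fin.val_one, Nat.cast_one, one_mul, Set.mem_Ioo]
    constructor <;> linarith [hr.2]
  unfold digit Branches
  split_ifs with hbr hle
  · fin_cases β
    exacts [hkeep hbr.2, hsub hbr.1]
  · exact hkeep (hle.trans_lt hqT)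
  · exact hsub (not_le.1 hle)

variable {x : ℝ} {b : ℕ → Fin 2}

theorem state_succ_fst (m : ℕ) :
    (state q x b (m + 1)).1 = (state q x b m).1 - ((digits q x b m : ℕ) : ℝ) * q m := rfl

open Classical in
theorem state_succ_snd (m : ℕ) : (state q x b (m + 1)).2 =
    if Branches q m (state q x b m).1 then (state q x b m).2 + 1 else (state q x b m).2 := rfl

theorem state_fst_mem_Ioo (hq : ∀ n, 0 ≤ q n) (hsum : Summable q)
    (hgap : ∀ n, q n < tailSum q (n + 2)) (hx : x ∈ Set.Ioo 0 (tailSum q 0)) (b : ℕ → Fin 2) (m : ℕ) :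
    (state q x b m).1 ∈ Set.Ioo 0 (tailSum q m) := by
  induction m with
  | zero => exact hx
  | succ m ih =>
    exact sub_digit_mul_mem_Ioo (tailSum_eq_add hsum m) (lt_tailSum_succ hq hsum hgap m) ih _

theorem sum_range_digits (m k : ℕ) :
    ∑ i ∈ range k, ((digits q x b (i + m) : ℕ) : ℝ) * q (i + m) =
      (state q x b m).1 - (state q x b (k + m)).1 := by
  induction k with
  | zero => simp
  | succ k ih => rw [sum_range_succ, ih, add_right_comm, state_succ_fst]; ring

theorem hasSum_digits (hq : ∀ n, 0 ≤ q n) (hsum : Summable q)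
    (hgap : ∀ n, q n < tailSum q (n + 2)) (hx : x ∈ Set.Ioo 0 (tailSum q 0)) (b : ℕ → Fin 2) (m : ℕ) :
    HasSum (fun i ↦ ((digits q x b (i + m) : ℕ) : ℝ) * q (i + m)) (state q x b m).1 := by
  have hmem := state_fst_mem_Ioo hq hsum hgap hx b
  have hrem : Tendsto (fun k ↦ (state q x b (k + m)).1) atTop (𝓝 0) :=
    squeeze_zero (fun k ↦ (hmem _).1.le) (fun k ↦ (hmem _).2.le)
      ((tendsto_sum_nat_add q).comp (tendsto_add_atTop_nat m))
  rw [hasSum_iff_tendsto_nat_of_nonneg (fun i ↦ mul_nonneg (Nat.cast_nonneg _) (hq _))]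
  simpa [sum_range_digits] using tendsto_const_nhds.sub hrem

theorem digits_of_branches {m : ℕ} (h : Branches q m (state q x b m).1) :
    digits q x b m = b (state q x b m).2 := by
  simp [digits, digit, h]

theorem digits_of_not_branches_of_le {m : ℕ} (h : ¬Branches q m (state q x b m).1)
    (hle : (state q x b m).1 ≤ q m) : digits q x b m = 0 := by
  simp [digits, digit, h, hle]

theorem digits_of_not_branches_of_lt {m : ℕ} (h : ¬Branches q m (state q x b m).1)
    (hlt : q m < (state q x b m).1) : digits q x b m = 1 := by
  simp [digits, digit, h, hlt.not_ge]

theorem state_fst_le_of_not_branches (hgap : ∀ n, q n < tailSum q (n + 2)) {m : ℕ}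
    (hnb : ∀ n ≥ m, ¬Branches q n (state q x b n).1) (hle : (state q x b m).1 ≤ q m) (k : ℕ) :
    (state q x b (k + m)).1 ≤ q (k + m) := by
  induction k with
  | zero => simpa using hle
  | succ k ih =>
    have hstay : (state q x b (k + 1 + m)).1 = (state q x b (k + m)).1 := by
      rw [add_right_comm, state_succ_fst,
        digits_of_not_branches_of_le (hnb _ (by omega)) ih]
      simp
    have hlt : (state q x b (k + 1 + m)).1 < tailSum q (k + 1 + m + 1) := by
      rw [hstay, show k + 1 + m + 1 = k + m + 2 by omega]
      exact ih.trans_lt (hgap _)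
    by_contra! hgt
    exact hnb _ (by omega) ⟨hgt, hlt⟩

theorem exists_branches (hq : ∀ n, 0 ≤ q n) (hsum : Summable q)
    (hgap : ∀ n, q n < tailSum q (n + 2)) (hx : x ∈ Set.Ioo 0 (tailSum q 0)) (b : ℕ → Fin 2) (M : ℕ) :
    ∃ m ≥ M, Branches q m (state q x b m).1 := by
  by_contra! hnb
  have hmem := state_fst_mem_Ioo hq hsum hgap hx b
  by_cases hle : ∃ m ≥ M, (state q x b m).1 ≤ q m
  · obtain ⟨m, hmM, hm⟩ := hle
    have hzero (i : ℕ) : digits q x b (i + m) = 0 :=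
      digits_of_not_branches_of_le (hnb _ (by omega))
        (state_fst_le_of_not_branches hgap (fun n hn ↦ hnb n (by omega)) hm i)
    have h0 : HasSum (fun _ : ℕ ↦ (0 : ℝ)) (state q x b m).1 := by
      simpa [hzero] using hasSum_digits hq hsum hgap hx b m
    exact (hmem m).1.ne' (h0.unique hasSum_zero)
  · push Not at hle
    have hone (i : ℕ) : digits q x b (i + M) = 1 :=
      digits_of_not_branches_of_lt (hnb _ (by omega)) (hle _ (by omega))
    have h1 : HasSum (fun i ↦ q (i + M)) (state q x b M).1 := by
      simpa [hone] using hasSum_digits hq hsum hgap hx b M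
    exact (hmem M).2.ne h1.tsum_eq.symm

theorem state_snd_mono : Monotone fun m ↦ (state q x b m).2 :=
  monotone_nat_of_le_succ fun m ↦ by rw [state_succ_snd]; split_ifs <;> omega

theorem exists_state_snd_lt (hq : ∀ n, 0 ≤ q n) (hsum : Summable q)
    (hgap : ∀ n, q n < tailSum q (n + 2)) (hx : x ∈ Set.Ioo 0 (tailSum q 0)) (b : ℕ → Fin 2) (m : ℕ) :
    ∃ n, (state q x b m).2 < (state q x b n).2 := by
  obtain ⟨n, hnm, hn⟩ := exists_branches hq hsum hgap hx b m
  refine ⟨n + 1, ?_⟩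
  rw [state_succ_snd, if_pos hn]
  exact Nat.lt_succ_of_le (state_snd_mono hnm)

theorem exists_branches_state_snd_eq (hq : ∀ n, 0 ≤ q n) (hsum : Summable q)
    (hgap : ∀ n, q n < tailSum q (n + 2)) (hx : x ∈ Set.Ioo 0 (tailSum q 0)) (b : ℕ → Fin 2) (j : ℕ) :
    ∃ m, Branches q m (state q x b m).1 ∧ (state q x b m).2 = j := by
  have hunbdd (j : ℕ) : ∃ m, j < (state q x b m).2 := by
    induction j with
    | zero => exact exists_state_snd_lt hq hsum hgap hx b 0
    | succ j ih =>
      obtain ⟨m, hm⟩ := ih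
      obtain ⟨n, hn⟩ := exists_state_snd_lt hq hsum hgap hx b m
      exact ⟨n, by omega⟩
  obtain ⟨m, hm⟩ := hunbdd j
  obtain ⟨n, hn, hn'⟩ := exists_eq_and_succ_eq_of_lt (f := fun m ↦ (state q x b m).2) rfl
    (fun m ↦ by rw [state_succ_snd]; split_ifs <;> omega) hm
  refine ⟨n, ?_, hn⟩
  by_contra hnb
  rw [state_succ_snd, if_neg hnb] at hn'
  omega

theorem state_eq_of_digits_eq {b b' : ℕ → Fin 2} (h : digits q x b = digits q x b') (m : ℕ) :
    state q x b m = state q x b' m := by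
  induction m with
  | zero => rfl
  | succ m ih =>
    refine Prod.ext ?_ ?_
    · rw [state_succ_fst, state_succ_fst, congrFun h m, ih]
    · rw [state_succ_snd, state_succ_snd, ih]

theorem digits_injective (hq : ∀ n, 0 ≤ q n) (hsum : Summable q)
    (hgap : ∀ n, q n < tailSum q (n + 2)) (hx : x ∈ Set.Ioo 0 (tailSum q 0)) :
    Function.Injective (digits q x) := by
  intro b b' h
  funext j
  obtain ⟨m, hbr, rfl⟩ := exists_branches_state_snd_eq hq hsum hgap hx b j
  have hst := state_eq_of_digits_eq h m
  have hbr' : Branches q m (state q x b' m).1 := hst ▸ hbr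
  have := congrFun h m
  rwa [digits_of_branches hbr, digits_of_branches hbr', ← hst] at this

theorem mk_expansions_eq_continuum (hq : ∀ n, 0 ≤ q n) (hsum : Summable q)
    (hgap : ∀ n, q n < tailSum q (n + 2)) (hx : x ∈ Set.Ioo 0 (∑' n, q n)) :
    Cardinal.mk {c : ℕ → Fin 2 // x = ∑' i, ((c i : ℕ) : ℝ) * q i} = Cardinal.continuum := by
  have hx' : x ∈ Set.Ioo 0 (tailSum q 0) := by simpa [tailSum] using hx
  have hcont : Cardinal.mk (ℕ → Fin 2) = Cardinal.continuum := by simp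
  have hexp (b : ℕ → Fin 2) : x = ∑' i, ((digits q x b i : ℕ) : ℝ) * q i := by
    simpa [state] using (hasSum_digits hq hsum hgap hx' b 0).tsum_eq.symm
  refine le_antisymm (hcont ▸ Cardinal.mk_subtype_le _) (hcont ▸ ?_)
  exact Cardinal.mk_le_of_injective (f := fun b ↦ ⟨digits q x b, hexp b⟩)
    fun b b' h ↦ digits_injective hq hsum hgap hx' (congrArg Subtype.val h)

section RatioSequence

variable {ρ : ℝ}

theorem lt_one_of_mul_le_succ (hq0 : 0 < q 0) (hlim : Tendsto q atTop (𝓝 0))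
    (hratio : ∀ n, ρ * q n ≤ q (n + 1)) : ρ < 1 := by
  by_contra! hρ
  have hge (n : ℕ) : q 0 ≤ q n :=
    (le_mul_of_one_le_left hq0.le (one_le_pow₀ hρ)).trans
      (geom_le (zero_le_one.trans hρ) n fun k _ ↦ hratio k)
  exact (ge_of_tendsto' hlim hge).not_gt hq0

theorem pow_div_mul_le_tailSum (hρ0 : 0 ≤ ρ) (hρ1 : ρ < 1) (hsum : Summable q)
    (hratio : ∀ n, ρ * q n ≤ q (n + 1)) (n j : ℕ) :
    ρ ^ j / (1 - ρ) * q n ≤ tailSum q (n + j) := by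
  have hgeom := (hasSum_geometric_of_lt_one hρ0 hρ1).mul_right (ρ ^ j * q n)
  rw [show (1 - ρ)⁻¹ * (ρ ^ j * q n) = ρ ^ j / (1 - ρ) * q n by ring] at hgeom
  refine hasSum_le (fun k ↦ ?_) hgeom ((summable_nat_add_iff (n + j)).2 hsum).hasSum
  calc ρ ^ k * (ρ ^ j * q n) = ρ ^ (k + j) * q (n + 0) := by ring_nf
    _ ≤ q (n + (k + j)) := geom_le hρ0 (k + j) fun i _ ↦ hratio (n + i)
    _ = q (k + (n + j)) := by ring_nf

theorem lt_tailSum_add_two (hρ0 : 0 ≤ ρ) (hρ1 : ρ < 1) (hρgold : 1 < ρ + ρ ^ 2)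
    (hq : ∀ n, 0 < q n) (hsum : Summable q) (hratio : ∀ n, ρ * q n ≤ q (n + 1)) (n : ℕ) :
    q n < tailSum q (n + 2) := by
  have hbig : 1 < ρ ^ 2 / (1 - ρ) := by rw [lt_div_iff₀ (by linarith)]; linarith
  calc q n < ρ ^ 2 / (1 - ρ) * q n := lt_mul_of_one_lt_left (hq n) hbig
    _ ≤ tailSum q (n + 2) := pow_div_mul_le_tailSum hρ0 hρ1 hsum hratio n 2

end RatioSequence

end Expansion

theorem stmt_11_general (φ ρ : ℝ) (hφ : φ = (1 + Real.sqrt 5) / 2) (hρ : 1 / φ < ρ)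
    (p : ℕ → ℝ) (hpos : ∀ i, 1 ≤ i → 0 < p i)
    (hρseq : ∀ i, 1 ≤ i → ρ * p i ≤ p (i + 1))
    (hsum : Summable (fun i => p (i + 1)))
    (S : ℝ) (hS : S = ∑' i : ℕ, p (i + 1))
    (x : ℝ) (hx1 : 0 < x) (hx2 : x < S) :
    Cardinal.mk {c : ℕ → Fin 2 // x = ∑' i : ℕ, ((c i : ℕ) : ℝ) * p (i + 1)} =
      Cardinal.continuum := by
  have hq (n : ℕ) : 0 < p (n + 1) := hpos (n + 1) (by omega)
  have hratio (n : ℕ) : ρ * p (n + 1) ≤ p (n + 1 + 1) := hρseq (n + 1) (by omega)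
  have hρinv : Real.goldenRatio⁻¹ < ρ := by rwa [hφ, one_div] at hρ
  have hρ0 : 0 ≤ ρ := (inv_pos.2 Real.goldenRatio_pos).le.trans hρinv.le
  have hρ1 : ρ < 1 := Expansion.lt_one_of_mul_le_succ (hq 0) hsum.tendsto_atTop_zero hratio
  have hgap := Expansion.lt_tailSum_add_two hρ0 hρ1 (one_lt_add_sq_of_inv_goldenRatio_lt hρinv)
    hq hsum hratio
  exact Expansion.mk_expansions_eq_continuum (fun n ↦ (hq n).le) hsum hgap ⟨hx1, hS ▸ hx2⟩

/-- If `(p_i)_{i ≥ 1}` is a `ρ`-sequence (i.e. `p_{i+1} ≥ ρ p_i` for all `i ≥ 1`) of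
positive reals with `ρ > 1/φ`, `p_i → 0`, and convergent sum `S`, then every
`x ∈ (0, S)` has a continuum of expansions `x = Σ c_i p_i` with digits `c_i ∈ {0,1}`. -/
theorem stmt_11 (φ ρ : ℝ) (hφ : φ = (1 + Real.sqrt 5) / 2) (hρ : 1 / φ < ρ)
    (p : ℕ → ℝ) (hpos : ∀ i, 1 ≤ i → 0 < p i)
    (hρseq : ∀ i, 1 ≤ i → ρ * p i ≤ p (i + 1))
    (hlim : Filter.Tendsto p Filter.atTop (nhds 0))
    (hsum : Summable (fun i => p (i + 1)))
    (S : ℝ) (hS : S = ∑' i : ℕ, p (i + 1))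
    (x : ℝ) (hx1 : 0 < x) (hx2 : x < S) :
    Cardinal.mk {c : ℕ → Fin 2 // x = ∑' i : ℕ, ((c i : ℕ) : ℝ) * p (i + 1)} =
      Cardinal.continuum :=
  stmt_11_general φ ρ hφ hρ p hpos hρseq hsum S hS x hx1 hx2
end

section
/- Let (p_i)_{i≥1} be a Kakeya sequence (positive, p_i → 0, and p_n ≤ Σ_{i=n+1}^∞ p_i for all n) with convergent sum S = Σ_{i=1}^∞ p_i. Then for every x ∈ [0, S] there exists a subset A ⊆ ℕ such that Σ_{i∈A} p_i = x (and Σ_{i∈ℕ∖A} p_i = S − x). -/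
/-!
Greedy algorithm: run through the terms in order and keep `q n` whenever the sum kept so far
stays `≤ x`. The gap `x - s n` left after `n` steps never exceeds the tail `∑_{k ≥ n} q k`:
if `q n` is kept, both sides drop by `q n`; if it is rejected, the gap is `< q n`, and the
Kakeya condition bounds `q n` by the next tail. Since the tails tend to `0`, the kept sums
converge to `x`.
-/

open Filter Topology

namespace Kakeya

variable (q : ℕ → ℝ) (x : ℝ)

noncomputable def greedySum : ℕ → ℝ
  | 0 => 0
  | n + 1 => greedySum n + if greedySum n + q n ≤ x then q n else 0

def greedySet : Set ℕ := {n | greedySum q x n + q n ≤ x}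

lemma greedySum_succ (n : ℕ) :
    greedySum q x (n + 1) = greedySum q x n + (greedySet q x).indicator q n := by
  classical
  rw [greedySum, Set.indicator_apply]
  rfl

lemma greedySum_eq_sum_range (n : ℕ) :
    greedySum q x n = ∑ i ∈ Finset.range n, (greedySet q x).indicator q i := by
  induction n with
  | zero => rfl
  | succ n ih => rw [greedySum_succ, ih, Finset.sum_range_succ]

lemma greedySum_le {x : ℝ} (hx : 0 ≤ x) (n : ℕ) : greedySum q x n ≤ x := by
  induction n with
  | zero => exact hx
  | succ n ih =>
    rw [greedySum_succ]
    by_cases hn : n ∈ greedySet q x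
    · rwa [Set.indicator_of_mem hn]
    · rwa [Set.indicator_of_notMem hn, add_zero]

lemma tsum_nat_add_eq_add_tsum_nat_add {q : ℕ → ℝ} (hq : Summable q) (n : ℕ) :
    ∑' k, q (k + n) = q n + ∑' k, q (n + 1 + k) := by
  rw [((summable_nat_add_iff n).2 hq).tsum_eq_zero_add, zero_add]
  simp only [add_comm, add_left_comm]

lemma sub_greedySum_le_tsum_nat_add {q : ℕ → ℝ} (hq : Summable q)
    (hkak : ∀ n, q n ≤ ∑' i, q (n + 1 + i)) {x : ℝ} (hx : x ≤ ∑' i, q i) (n : ℕ) :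
    x - greedySum q x n ≤ ∑' k, q (k + n) := by
  induction n with
  | zero => simpa [greedySum] using hx
  | succ n ih =>
    have htail := tsum_nat_add_eq_add_tsum_nat_add hq n
    have htail' : ∑' k, q (k + (n + 1)) = ∑' k, q (n + 1 + k) := by
      simp only [add_comm]
    rw [greedySum_succ, htail']
    by_cases hn : n ∈ greedySet q x
    · rw [Set.indicator_of_mem hn]
      linarith
    · have hgap : x < greedySum q x n + q n := not_le.mp hn
      rw [Set.indicator_of_notMem hn, add_zero]
      linarith [hkak n]

lemma tendsto_greedySum {q : ℕ → ℝ} (hq : Summable q)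
    (hkak : ∀ n, q n ≤ ∑' i, q (n + 1 + i)) {x : ℝ} (hx0 : 0 ≤ x) (hx : x ≤ ∑' i, q i) :
    Tendsto (greedySum q x) atTop (𝓝 x) := by
  have hlower : Tendsto (fun n => x - ∑' k, q (k + n)) atTop (𝓝 x) := by
    simpa using tendsto_const_nhds.sub (tendsto_sum_nat_add q)
  refine tendsto_of_tendsto_of_tendsto_of_le_of_le hlower tendsto_const_nhds (fun n => ?_)
    (greedySum_le q hx0)
  linarith [sub_greedySum_le_tsum_nat_add hq hkak hx n]

theorem hasSum_indicator_greedySet {q : ℕ → ℝ} (hq0 : ∀ i, 0 ≤ q i) (hq : Summable q)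
    (hkak : ∀ n, q n ≤ ∑' i, q (n + 1 + i)) {x : ℝ} (hx0 : 0 ≤ x) (hx : x ≤ ∑' i, q i) :
    HasSum ((greedySet q x).indicator q) x := by
  rw [hasSum_iff_tendsto_nat_of_nonneg (Set.indicator_nonneg fun i _ => hq0 i)]
  exact (tendsto_greedySum hq hkak hx0 hx).congr (greedySum_eq_sum_range q x)

end Kakeya

lemma tsum_image_succ {α : Type*} [AddCommMonoid α] [TopologicalSpace α] (f : ℕ → α)
    (B : Set ℕ) : ∑' i : Nat.succ '' B, f i = ∑' i, B.indicator (fun i => f (i + 1)) i := by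
  rw [tsum_image f Nat.succ_injective.injOn]
  exact tsum_subtype B (fun i => f (i + 1))

theorem stmt_13_general (p : ℕ → ℝ) (S : ℝ)
    (hpos : ∀ i, 1 ≤ i → 0 < p i)
    (hsum : Summable (fun i => p (i + 1)))
    (hkak : ∀ n, 1 ≤ n → p n ≤ ∑' i : ℕ, p (n + 1 + i))
    (hS : S = ∑' i : ℕ, p (i + 1))
    (x : ℝ) (hx : x ∈ Set.Icc 0 S) :
    ∃ A : Set ℕ, A ⊆ {i : ℕ | 1 ≤ i} ∧
      (∑' i : A, p i) = x ∧ (∑' i : ({i : ℕ | 1 ≤ i} \ A : Set ℕ), p i) = S - x := by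
  set q : ℕ → ℝ := fun i => p (i + 1)
  have hqkak : ∀ n, q n ≤ ∑' i, q (n + 1 + i) := fun n => by
    simpa only [q, add_right_comm] using hkak (n + 1) n.succ_pos
  set B := Kakeya.greedySet q x
  have hB : HasSum (B.indicator q) x := Kakeya.hasSum_indicator_greedySet
    (fun i => (hpos (i + 1) i.succ_pos).le) hsum hqkak hx.1 (hS ▸ hx.2)
  have hBc : HasSum (Bᶜ.indicator q) (S - x) := by
    rw [Set.indicator_compl, hS]
    exact hsum.hasSum.sub hB
  have hdiff : {i : ℕ | 1 ≤ i} \ Nat.succ '' B = Nat.succ '' Bᶜ := by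
    rw [Set.image_compl_eq_range_sdiff_image Nat.succ_injective, Nat.range_succ]
    rfl
  refine ⟨Nat.succ '' B, ?_, ?_, ?_⟩
  · exact (Set.image_subset_range _ _).trans Nat.range_succ.subset
  · rw [tsum_image_succ, hB.tsum_eq]
  · rw [hdiff, tsum_image_succ, hBc.tsum_eq]

/-- If `(p_i)_{i ≥ 1}` is a Kakeya sequence with convergent sum `S`, then for every
`x ∈ [0, S]` there is a set `A` of indices (all `≥ 1`) with `Σ_{i ∈ A} p_i = x` and
`Σ_{i ∉ A} p_i = S - x`. -/
theorem stmt_13 (p : ℕ → ℝ) (S : ℝ)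
    (hpos : ∀ i, 1 ≤ i → 0 < p i)
    (hlim : Filter.Tendsto p Filter.atTop (nhds 0))
    (hsum : Summable (fun i => p (i + 1)))
    (hkak : ∀ n, 1 ≤ n → p n ≤ ∑' i : ℕ, p (n + 1 + i))
    (hS : S = ∑' i : ℕ, p (i + 1))
    (x : ℝ) (hx : x ∈ Set.Icc 0 S) :
    ∃ A : Set ℕ, A ⊆ {i : ℕ | 1 ≤ i} ∧
      (∑' i : A, p i) = x ∧ (∑' i : ({i : ℕ | 1 ≤ i} \ A : Set ℕ), p i) = S - x :=
  stmt_13_general p S hpos hsum hkak hS x hx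
end
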